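/- arXiv:1001.2662 — 7 statements merged into one kernel-verified Lean document; each statement's English description precedes it below -/
import Mathlib

section
/- For any q-ary discrete memoryless channel W, the maximum-likelihood error probability satisfies P_e(W) ≤ (q-1)·Z(W). -/
open MeasureTheory Filter Real
open scoped Classical

noncomputable section

namespace Polar

/-- `IsChannel W` : `W x y` is the probability of output `y` given input `x`,
each row is a probability distribution. -/
def IsChannel {X Y : Type*} (W : X → Y → ℝ) : Prop :=
  (∀ x y, 0 ≤ W x y) ∧ ∀ x, HasSum (W x) 1

/-- Bhattacharyya parameter `Z_{x,x'}(W)` between inputs `x` and `x'`. -/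
def Zb {X Y : Type*} (W : X → Y → ℝ) (x x' : X) : ℝ :=
  ∑' y, Real.sqrt (W x y * W x' y)

/-- Average Bhattacharyya parameter `Z(W)`. -/
def Zavg {X Y : Type*} [Fintype X] (W : X → Y → ℝ) : ℝ :=
  (1 / ((Fintype.card X : ℝ) * ((Fintype.card X : ℝ) - 1))) *
    ∑ p ∈ Finset.univ.offDiag, Zb W p.1 p.2

/-!
If the output `y` is decoded wrongly when `x` was sent, some `x' ≠ x` has
`W(y|x) ≤ W(y|x')`, and then `W(y|x) ≤ √(W(y|x) W(y|x'))`. Bounding the error term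
at `y` by the sum of these square roots over all `x' ≠ x` and summing over `y`
gives `∑_y [y ∉ 𝒟_x] W(y|x) ≤ ∑_{x' ≠ x} Z_{x,x'}(W)`; averaging over `x` yields
`P_e(W) ≤ (1/q) ∑_{x ≠ x'} Z_{x,x'}(W) = (q - 1) Z(W)`.
-/

theorem _root_.Finset.sum_offDiag_eq_sum_sum_erase {α M : Type*} [DecidableEq α]
    [AddCommMonoid M] (s : Finset α) (f : α → α → M) :
    ∑ p ∈ s.offDiag, f p.1 p.2 = ∑ a ∈ s, ∑ b ∈ s.erase a, f a b :=
  Finset.sum_finset_product' _ _ _ fun p => by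
    simp only [Finset.mem_offDiag, Finset.mem_erase]
    tauto

theorem _root_.Real.sqrt_mul_le_add {a b : ℝ} (ha : 0 ≤ a) (hb : 0 ≤ b) :
    √(a * b) ≤ a + b :=
  Real.sqrt_le_iff.mpr ⟨add_nonneg ha hb, by nlinarith⟩

theorem ite_error_le_sum_sqrt_mul {X : Type*} [Fintype X] [DecidableEq X] {p : X → ℝ}
    (hp : ∀ x, 0 ≤ p x) (x : X) :
    (if ∀ x', x' ≠ x → p x' < p x then 0 else p x) ≤
      ∑ x' ∈ Finset.univ.erase x, √(p x * p x') := by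
  have hsum_nonneg : 0 ≤ ∑ x' ∈ Finset.univ.erase x, √(p x * p x') :=
    Finset.sum_nonneg fun _ _ => Real.sqrt_nonneg _
  split_ifs with hdecoded
  · exact hsum_nonneg
  push Not at hdecoded
  obtain ⟨x', hx'x, hle⟩ := hdecoded
  calc p x ≤ √(p x * p x') := Real.le_sqrt_of_sq_le (by nlinarith [hp x])
    _ ≤ ∑ x' ∈ Finset.univ.erase x, √(p x * p x') :=
      Finset.single_le_sum (f := fun x' => √(p x * p x')) (fun _ _ => Real.sqrt_nonneg _)
        (Finset.mem_erase.mpr ⟨hx'x, Finset.mem_univ _⟩)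

section Channel

variable {X Y : Type*} {W : X → Y → ℝ}

theorem IsChannel.summable_sqrt_mul (hW : IsChannel W) (x x' : X) :
    Summable fun y => √(W x y * W x' y) :=
  Summable.of_nonneg_of_le (fun _ => Real.sqrt_nonneg _)
    (fun y => Real.sqrt_mul_le_add (hW.1 x y) (hW.1 x' y))
    ((hW.2 x).summable.add (hW.2 x').summable)

theorem IsChannel.tsum_error_le_sum_Zb [Fintype X] [DecidableEq X] (hW : IsChannel W) (x : X) :
    ∑' y, (if ∀ x', x' ≠ x → W x' y < W x y then 0 else W x y) ≤
      ∑ x' ∈ Finset.univ.erase x, Zb W x x' := by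
  have herror_summable :
      Summable fun y => if ∀ x', x' ≠ x → W x' y < W x y then 0 else W x y :=
    Summable.of_nonneg_of_le (fun y => by split_ifs <;> simp [hW.1 x y])
      (fun y => by split_ifs <;> simp [hW.1 x y]) (hW.2 x).summable
  calc ∑' y, (if ∀ x', x' ≠ x → W x' y < W x y then 0 else W x y)
      ≤ ∑' y, ∑ x' ∈ Finset.univ.erase x, √(W x y * W x' y) :=
        herror_summable.tsum_le_tsum (fun y => ite_error_le_sum_sqrt_mul (fun x => hW.1 x y) x)
          (summable_sum fun x' _ => hW.summable_sqrt_mul x x')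
    _ = ∑ x' ∈ Finset.univ.erase x, Zb W x x' :=
        Summable.tsum_finsetSum fun x' _ => hW.summable_sqrt_mul x x'

end Channel

theorem card_sub_one_mul_Zavg {X Y : Type*} [Fintype X] (hq : 2 ≤ Fintype.card X)
    (W : X → Y → ℝ) :
    ((Fintype.card X : ℝ) - 1) * Zavg W =
      1 / (Fintype.card X : ℝ) * ∑ p ∈ Finset.univ.offDiag, Zb W p.1 p.2 := by
  have hq' : (2 : ℝ) ≤ Fintype.card X := by exact_mod_cast hq
  have hq1 : (Fintype.card X : ℝ) - 1 ≠ 0 := by linarith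
  rw [Zavg]
  field_simp

theorem error_prob_le_bhattacharyya_general {X Y : Type*} [Fintype X]
    (hq : 2 ≤ Fintype.card X) (W : X → Y → ℝ) (hW : IsChannel W) :
    (1 / (Fintype.card X : ℝ)) *
        ∑ x, ∑' y, (if ∀ x', x' ≠ x → W x' y < W x y then 0 else W x y) ≤
      ((Fintype.card X : ℝ) - 1) * Zavg W := by
  rw [card_sub_one_mul_Zavg hq, Finset.sum_offDiag_eq_sum_sum_erase]
  gcongr with x
  exact hW.tsum_error_le_sum_Zb x

/-- `P_e(W) ≤ (q-1) Z(W)`, where `P_e(W)` is the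
maximum-likelihood error probability under uniform inputs. -/
theorem error_prob_le_bhattacharyya {X Y : Type*} [Fintype X] [Countable Y]
    (hq : 2 ≤ Fintype.card X) (W : X → Y → ℝ) (hW : IsChannel W) :
    (1 / (Fintype.card X : ℝ)) *
        ∑ x, ∑' y, (if ∀ x', x' ≠ x → W x' y < W x y then 0 else W x y) ≤
      ((Fintype.card X : ℝ) - 1) * Zavg W :=
  error_prob_le_bhattacharyya_general hq W hW

end Polar
end
end

section
/- For any q-ary discrete memoryless channel W, the symmetric capacity satisfies I(W) ≥ log_q( q / (1 + (q-1)·Z(W)) ). -/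
open MeasureTheory Filter Real
open scoped Classical

noncomputable section

namespace Polar

/-- Symmetric capacity `I(W)` (logarithms to base `q = |X|`). -/
def symCap {X Y : Type*} [Fintype X] (W : X → Y → ℝ) : ℝ :=
  ∑ x, ∑' y, (1 / (Fintype.card X : ℝ)) * W x y *
    Real.logb (Fintype.card X) (W x y / ((1 / (Fintype.card X : ℝ)) * ∑ x', W x' y))

/-!
Feed a uniform input through `W`, let `p` be the joint law of input and output and `r` the product
of its marginals, so that `I(W) · log q = D(p ‖ r)`. Relative entropy dominates the Rényi divergence
of order `1/2`: by concavity of `log`, `D(p ‖ r) ≥ -2 log ∑ √(p r)`. Grouped by output, the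
Bhattacharyya coefficient `∑ √(p r)` is `∑_y √(P y) · (1/q) ∑_x √(W(y|x))`, where `P` is the output
law, and Cauchy–Schwarz bounds it by `√(∑_y ((1/q) ∑_x √(W(y|x)))²) = √((1 + (q-1) Z(W)) / q)`.
-/

end Polar

section

variable {ι : Type*}

theorem Summable.sqrt_mul {f g : ι → ℝ} (hf0 : ∀ i, 0 ≤ f i) (hg0 : ∀ i, 0 ≤ g i)
    (hf : Summable f) (hg : Summable g) : Summable fun i => √(f i * g i) :=
  .of_nonneg_of_le (fun _ => sqrt_nonneg _)
    (fun i => sqrt_le_iff.2 ⟨by linarith [hf0 i, hg0 i], by nlinarith [hf0 i, hg0 i]⟩) (hf.add hg)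

/-- The tangent line of the concave `log` at `A`, evaluated at `√(r / p)`. -/
theorem mul_log_div_le_tangent {p r A : ℝ} (hA : 0 < A) (hp : 0 ≤ p) (hr : 0 < p → 0 < r) :
    p * log (r / p) ≤ 2 * (log A - 1) * p + 2 / A * √(p * r) := by
  rcases hp.eq_or_lt with rfl | hp
  · simp
  have hr := hr hp
  have hsqrt : √(p * r) = p * √(r / p) := by
    rw [show p * r = p ^ 2 * (r / p) by field_simp, sqrt_mul (sq_nonneg p), sqrt_sq hp.le]
  have htangent := log_le_sub_one_of_pos (show 0 < √(r / p) / A by positivity)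
  rw [log_div (by positivity) hA.ne', log_sqrt (by positivity)] at htangent
  rw [hsqrt]
  calc p * log (r / p) ≤ p * (2 * (√(r / p) / A - 1 + log A)) := by gcongr; linarith
    _ = _ := by field_simp; ring

theorem mul_log_div_le_sub {p r : ℝ} (hp : 0 ≤ p) (hr0 : 0 ≤ r) (hr : 0 < p → 0 < r) :
    p * log (r / p) ≤ r - p := by
  rcases hp.eq_or_lt with rfl | hp
  · simpa using hr0
  have hr := hr hp
  calc p * log (r / p) ≤ p * (r / p - 1) := by gcongr; exact log_le_sub_one_of_pos (by positivity)
    _ = r - p := by field_simp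

theorem tsum_sqrt_mul_pos {p r : ι → ℝ} (hp0 : ∀ i, 0 ≤ p i) (hp : HasSum p 1)
    (hr0 : ∀ i, 0 ≤ r i) (hpr : ∀ i, 0 < p i → 0 < r i) (hr : Summable r) :
    0 < ∑' i, √(p i * r i) := by
  obtain ⟨i, hi⟩ : ∃ i, p i ≠ 0 := by
    by_contra! h
    rw [show p = 0 from funext h] at hp
    exact one_ne_zero (hp.unique hasSum_zero)
  have hpi := (hp0 i).lt_of_ne' hi
  exact (hp.summable.sqrt_mul hp0 hr0 hr).tsum_pos (fun _ => sqrt_nonneg _) i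
    (sqrt_pos.2 (mul_pos hpi (hpr i hpi)))

theorem tsum_mul_log_div_le_two_mul_log_tsum_sqrt_mul {p r : ι → ℝ} (hp0 : ∀ i, 0 ≤ p i)
    (hp : HasSum p 1) (hr0 : ∀ i, 0 ≤ r i) (hpr : ∀ i, 0 < p i → 0 < r i) (hr : Summable r)
    (hs : Summable fun i => p i * log (r i / p i)) :
    ∑' i, p i * log (r i / p i) ≤ 2 * log (∑' i, √(p i * r i)) := by
  set A := ∑' i, √(p i * r i)
  have hA : 0 < A := tsum_sqrt_mul_pos hp0 hp hr0 hpr hr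
  have hsum : HasSum (fun i => 2 * (log A - 1) * p i + 2 / A * √(p i * r i))
      (2 * (log A - 1) * 1 + 2 / A * A) :=
    (hp.mul_left _).add ((hp.summable.sqrt_mul hp0 hr0 hr).hasSum.mul_left _)
  calc ∑' i, p i * log (r i / p i)
      ≤ ∑' i, (2 * (log A - 1) * p i + 2 / A * √(p i * r i)) :=
        hs.tsum_le_tsum (fun i => mul_log_div_le_tangent hA (hp0 i) (hpr i)) hsum.summable
    _ = 2 * log A := by rw [hsum.tsum_eq]; field_simp; ring

theorem tsum_mul_le_sqrt_mul_sqrt {f g : ι → ℝ} {a b : ℝ} (hf0 : ∀ i, 0 ≤ f i)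
    (hg0 : ∀ i, 0 ≤ g i) (hf : HasSum (fun i => f i ^ 2) a) (hg : HasSum (fun i => g i ^ 2) b) :
    ∑' i, f i * g i ≤ √a * √b := by
  have ha := hf.nonneg fun i => sq_nonneg (f i)
  have hb := hg.nonneg fun i => sq_nonneg (g i)
  obtain ⟨C, -, hC, hfg⟩ := inner_le_Lp_mul_Lq_hasSum_of_nonneg HolderConjugate.two_two
    (sqrt_nonneg a) (sqrt_nonneg b) hf0 hg0
    (by simpa only [rpow_two, sq_sqrt ha] using hf) (by simpa only [rpow_two, sq_sqrt hb] using hg)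
  exact hfg.tsum_eq ▸ hC

end

section

variable {α β : Type*}

theorem summable_prod_of_finite_left [Finite α] {f : α × β → ℝ}
    (hf : ∀ a, Summable fun b => f (a, b)) : Summable f :=
  summable_abs_iff.1 <| (summable_prod_of_nonneg fun _ => abs_nonneg _).2
    ⟨fun a => (hf a).abs, .of_finite⟩

theorem tsum_prod_eq_sum_tsum [Fintype α] {f : α × β → ℝ}
    (hf : ∀ a, Summable fun b => f (a, b)) : ∑' z, f z = ∑ a, ∑' b, f (a, b) := by
  rw [(summable_prod_of_finite_left hf).tsum_prod' hf, tsum_fintype]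

theorem hasSum_prod_of_fintype_left [Fintype α] {f : α × β → ℝ} {g : α → ℝ}
    (hf : ∀ a, HasSum (fun b => f (a, b)) (g a)) : HasSum f (∑ a, g a) := by
  have hs := summable_prod_of_finite_left fun a => (hf a).summable
  rw [hs.hasSum_iff, tsum_prod_eq_sum_tsum fun a => (hf a).summable]
  exact Finset.sum_congr rfl fun a _ => (hf a).tsum_eq

end

namespace Polar

section

variable {X Y : Type*} {W : X → Y → ℝ}

theorem IsChannel.Zb_self (hW : IsChannel W) (x : X) : Zb W x x = 1 := by
  simp only [Zb, sqrt_mul_self (hW.1 x _)]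
  exact (hW.2 x).tsum_eq

variable [Fintype X]

def outputDist (W : X → Y → ℝ) (y : Y) : ℝ :=
  (1 / (Fintype.card X : ℝ)) * ∑ x', W x' y

def jointDist (W : X → Y → ℝ) (z : X × Y) : ℝ :=
  (1 / (Fintype.card X : ℝ)) * W z.1 z.2

def productDist (W : X → Y → ℝ) (z : X × Y) : ℝ :=
  (1 / (Fintype.card X : ℝ)) * outputDist W z.2

namespace IsChannel

theorem hasSum_outputDist [Nonempty X] (hW : IsChannel W) : HasSum (outputDist W) 1 := by
  have h := (hasSum_sum fun x (_ : x ∈ Finset.univ) => hW.2 x).mul_left (1 / (Fintype.card X : ℝ))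
  rwa [Finset.sum_const, Finset.card_univ, nsmul_one, one_div_mul_cancel (by positivity)] at h

theorem jointDist_nonneg (hW : IsChannel W) (z : X × Y) : 0 ≤ jointDist W z :=
  mul_nonneg (by positivity) (hW.1 z.1 z.2)

theorem outputDist_nonneg (hW : IsChannel W) (y : Y) : 0 ≤ outputDist W y :=
  mul_nonneg (by positivity) (Finset.sum_nonneg fun x _ => hW.1 x y)

theorem productDist_nonneg (hW : IsChannel W) (z : X × Y) : 0 ≤ productDist W z :=
  mul_nonneg (by positivity) (hW.outputDist_nonneg z.2)

theorem jointDist_le_card_mul_productDist [Nonempty X] (hW : IsChannel W) (z : X × Y) :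
    jointDist W z ≤ Fintype.card X * productDist W z := by
  rw [productDist, ← mul_assoc, mul_one_div_cancel (by positivity), one_mul, jointDist, outputDist]
  gcongr
  exact Finset.single_le_sum (fun x _ => hW.1 x z.2) (Finset.mem_univ z.1)

theorem productDist_pos [Nonempty X] (hW : IsChannel W) {z : X × Y} (hz : 0 < jointDist W z) :
    0 < productDist W z :=
  pos_of_mul_pos_right (hz.trans_le (hW.jointDist_le_card_mul_productDist z)) (by positivity)

theorem hasSum_jointDist [Nonempty X] (hW : IsChannel W) : HasSum (jointDist W) 1 := by
  have h := hasSum_prod_of_fintype_left (f := jointDist W) fun x => (hW.2 x).mul_left _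
  rwa [Finset.sum_const, Finset.card_univ, nsmul_eq_mul, mul_one, mul_one_div_cancel (by positivity)]
    at h

theorem summable_productDist [Nonempty X] (hW : IsChannel W) : Summable (productDist W) :=
  summable_prod_of_finite_left fun _ => hW.hasSum_outputDist.summable.mul_left _

theorem neg_log_card_mul_jointDist_le [Nonempty X] (hW : IsChannel W) (z : X × Y) :
    -(log (Fintype.card X) * jointDist W z) ≤
      jointDist W z * log (productDist W z / jointDist W z) := by
  rcases (hW.jointDist_nonneg z).eq_or_lt with hz | hz
  · simp [← hz]
  have hrz := hW.productDist_pos hz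
  have hlog := log_le_log hz (hW.jointDist_le_card_mul_productDist z)
  rw [log_mul (by positivity) hrz.ne'] at hlog
  rw [log_div hrz.ne' hz.ne']
  nlinarith

theorem summable_jointDist_mul_log [Nonempty X] (hW : IsChannel W) :
    Summable fun z => jointDist W z * log (productDist W z / jointDist W z) := by
  have hp := hW.hasSum_jointDist.summable
  have hshift : Summable fun z =>
      jointDist W z * log (productDist W z / jointDist W z) + log (Fintype.card X) * jointDist W z :=
    .of_nonneg_of_le (fun z => by linarith [hW.neg_log_card_mul_jointDist_le z])
      (fun z => add_le_add_left (mul_log_div_le_sub (hW.jointDist_nonneg z)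
        (hW.productDist_nonneg z) fun hz => hW.productDist_pos hz) _)
      ((hW.summable_productDist.sub hp).add (hp.mul_left _))
  simpa using hshift.sub (hp.mul_left (log (Fintype.card X)))

theorem symCap_eq [Nonempty X] (hW : IsChannel W) :
    symCap W = -(∑' z, jointDist W z * log (productDist W z / jointDist W z)) /
      log (Fintype.card X) := by
  rw [tsum_prod_eq_sum_tsum hW.summable_jointDist_mul_log.prod_factor, ← Finset.sum_neg_distrib,
    Finset.sum_div, symCap]
  refine Finset.sum_congr rfl fun x _ => ?_
  rw [← tsum_neg, ← tsum_div_const]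
  refine tsum_congr fun y => ?_
  rw [productDist, jointDist, mul_div_mul_left _ _ (by positivity), logb, outputDist]
  dsimp only
  rw [← inv_div (W x y), log_inv]
  ring

theorem sum_sum_Zb_eq [Nontrivial X] (hW : IsChannel W) :
    ∑ x, ∑ x', Zb W x x' = Fintype.card X * (1 + (Fintype.card X - 1) * Zavg W) := by
  have hq : (1 : ℝ) < Fintype.card X := by exact_mod_cast Fintype.one_lt_card
  rw [← Finset.sum_product' (f := fun x x' => Zb W x x'), ← Finset.diag_union_offDiag,
    Finset.sum_union (Finset.disjoint_diag_offDiag _), Finset.sum_diag]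
  simp only [hW.Zb_self, Finset.sum_const, Finset.card_univ, nsmul_eq_mul, mul_one, Zavg]
  field_simp [(sub_pos.2 hq).ne']

theorem hasSum_sq_mean_sqrt [Nontrivial X] (hW : IsChannel W) :
    HasSum (fun y => (1 / (Fintype.card X : ℝ) * ∑ x, √(W x y)) ^ 2)
      ((1 + (Fintype.card X - 1) * Zavg W) / Fintype.card X) := by
  have h : HasSum (fun y => ∑ x, ∑ x', √(W x y * W x' y)) (∑ x, ∑ x', Zb W x x') :=
    hasSum_sum fun x _ => hasSum_sum fun x' _ =>
      ((hW.2 x).summable.sqrt_mul (hW.1 x) (hW.1 x') (hW.2 x').summable).hasSum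
  have hval : (1 + (Fintype.card X - 1) * Zavg W) / Fintype.card X =
      (1 / (Fintype.card X : ℝ)) ^ 2 * ∑ x, ∑ x', Zb W x x' := by
    rw [hW.sum_sum_Zb_eq]
    field_simp
  have hterm : ∀ y, (1 / (Fintype.card X : ℝ) * ∑ x, √(W x y)) ^ 2 =
      (1 / (Fintype.card X : ℝ)) ^ 2 * ∑ x, ∑ x', √(W x y * W x' y) := fun y => by
    rw [mul_pow, sq (∑ x, √(W x y)), Finset.sum_mul_sum]
    simp only [sqrt_mul (hW.1 _ y)]
  rw [hval]
  simpa only [hterm] using h.mul_left ((1 / (Fintype.card X : ℝ)) ^ 2)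

theorem sqrt_jointDist_mul_productDist (hW : IsChannel W) (x : X) (y : Y) :
    √(jointDist W (x, y) * productDist W (x, y)) =
      √(outputDist W y) * (1 / (Fintype.card X : ℝ) * √(W x y)) := by
  rw [jointDist, productDist,
    show ∀ c a b : ℝ, c * a * (c * b) = c ^ 2 * (a * b) from fun _ _ _ => by ring,
    sqrt_mul (sq_nonneg _), sqrt_sq (by positivity), sqrt_mul (hW.1 x y)]
  ring

theorem tsum_sqrt_jointDist_mul_productDist_le [Nontrivial X] (hW : IsChannel W) :
    ∑' z, √(jointDist W z * productDist W z) ≤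
      √((1 + (Fintype.card X - 1) * Zavg W) / Fintype.card X) := by
  have hslice : ∀ x, Summable fun y => √(jointDist W (x, y) * productDist W (x, y)) := fun x =>
    ((hW.2 x).summable.mul_left _).sqrt_mul (fun y => hW.jointDist_nonneg (x, y))
      (fun y => hW.productDist_nonneg (x, y)) (hW.hasSum_outputDist.summable.mul_left _)
  have hP : HasSum (fun y => √(outputDist W y) ^ 2) 1 := by
    simpa only [sq_sqrt (hW.outputDist_nonneg _)] using hW.hasSum_outputDist
  calc ∑' z, √(jointDist W z * productDist W z)
      = ∑' y, √(outputDist W y) * (1 / (Fintype.card X : ℝ) * ∑ x, √(W x y)) := by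
        rw [tsum_prod_eq_sum_tsum hslice, ← Summable.tsum_finsetSum fun x _ => hslice x]
        simp only [hW.sqrt_jointDist_mul_productDist, ← Finset.mul_sum]
    _ ≤ √1 * √((1 + (Fintype.card X - 1) * Zavg W) / Fintype.card X) :=
        tsum_mul_le_sqrt_mul_sqrt (fun _ => sqrt_nonneg _) (fun _ => by positivity) hP
          hW.hasSum_sq_mean_sqrt
    _ = _ := by rw [sqrt_one, one_mul]

theorem tsum_jointDist_mul_log_le [Nontrivial X] (hW : IsChannel W) :
    ∑' z, jointDist W z * log (productDist W z / jointDist W z) ≤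
      log ((1 + (Fintype.card X - 1) * Zavg W) / Fintype.card X) := by
  have hBC := hW.tsum_sqrt_jointDist_mul_productDist_le
  have hpos := tsum_sqrt_mul_pos hW.jointDist_nonneg hW.hasSum_jointDist hW.productDist_nonneg
    (fun _ => hW.productDist_pos) hW.summable_productDist
  calc ∑' z, jointDist W z * log (productDist W z / jointDist W z)
      ≤ 2 * log (∑' z, √(jointDist W z * productDist W z)) :=
        tsum_mul_log_div_le_two_mul_log_tsum_sqrt_mul hW.jointDist_nonneg hW.hasSum_jointDist
          hW.productDist_nonneg (fun _ => hW.productDist_pos) hW.summable_productDist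
          hW.summable_jointDist_mul_log
    _ ≤ 2 * log √((1 + (Fintype.card X - 1) * Zavg W) / Fintype.card X) := by gcongr
    _ = _ := by rw [log_sqrt (sqrt_pos.1 (hpos.trans_le hBC)).le]; ring

end IsChannel

end

theorem symCap_ge_of_bhattacharyya_general {X Y : Type*} [Fintype X]
    (hq : 2 ≤ Fintype.card X) (W : X → Y → ℝ) (hW : IsChannel W) :
    Real.logb (Fintype.card X)
        ((Fintype.card X : ℝ) / (1 + ((Fintype.card X : ℝ) - 1) * Zavg W)) ≤
      symCap W := by
  have : Nontrivial X := Fintype.one_lt_card_iff_nontrivial.1 hq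
  have hlog : 0 < log (Fintype.card X) := log_pos (by exact_mod_cast hq)
  rw [← inv_div, logb_inv, hW.symCap_eq, logb, neg_div]
  exact neg_le_neg (div_le_div_of_nonneg_right hW.tsum_jointDist_mul_log_le hlog.le)

/-- `I(W) ≥ log_q (q / (1 + (q-1) Z(W)))`. -/
theorem symCap_ge_of_bhattacharyya {X Y : Type*} [Fintype X] [Countable Y]
    (hq : 2 ≤ Fintype.card X) (W : X → Y → ℝ) (hW : IsChannel W) :
    Real.logb (Fintype.card X)
        ((Fintype.card X : ℝ) / (1 + ((Fintype.card X : ℝ) - 1) * Zavg W)) ≤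
      symCap W :=
  symCap_ge_of_bhattacharyya_general hq W hW

end Polar
end
end

section
/- For any q-ary discrete memoryless channel W, the symmetric capacity satisfies I(W) ≤ log_q(q/2) + (log_q 2)·√(1 − Z(W)²). -/
/-!
For a fixed output `y`, the capacity integrand of input `x` splits as `log (q/2)` plus
`log (2 W(y|x) / ∑ₓ' W(y|x'))`, and the latter is at most the average over `x' ≠ x` of
`log (2 W(y|x) / (W(y|x) + W(y|x')))`. Symmetrising in `(x, x')` and using the concavity of
the binary entropy bounds each pair by `|W(y|x) - W(y|x')| log 2`, so
`I(W) ≤ log_q (q/2) + (log_q 2) δ` with `δ` the average total variation distance between the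
rows of `W`. Since `(|a - b|, 2√(ab))` has Euclidean length `a + b`, Cauchy–Schwarz gives
`u δ + v Z(W) ≤ √(u² + v²)` for all `u, v`; testing with `(u, v) = (δ, Z(W))` yields
`δ² + Z(W)² ≤ 1`.
-/

open MeasureTheory Filter Real
open scoped Classical

noncomputable section

namespace Polar

open Finset

lemma log_two_mul_one_sub_abs_le_binEntropy {u : ℝ} (hu₀ : 0 ≤ u) (hu₁ : u ≤ 1) :
    log 2 * (1 - |1 - 2 * u|) ≤ binEntropy u := by
  wlog hu : u ≤ 2⁻¹ generalizing u
  · have := this (u := 1 - u) (by linarith) (by linarith) (by linarith)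
    rwa [binEntropy_one_sub, show 1 - 2 * (1 - u) = -(1 - 2 * u) by ring, abs_neg] at this
  have := strictConcave_binEntropy.concaveOn.2 (by norm_num : (0 : ℝ) ∈ Set.Icc 0 1)
    (by norm_num : (2⁻¹ : ℝ) ∈ Set.Icc 0 1) (by linarith : 0 ≤ 1 - 2 * u)
    (by linarith : 0 ≤ 2 * u) (by ring)
  rw [abs_of_nonneg (by linarith)]
  simpa [mul_comm] using this

lemma mul_log_div_add_mul_log_div_le {a b : ℝ} (ha : 0 ≤ a) (hb : 0 ≤ b) :
    a * log (a / ((a + b) / 2)) + b * log (b / ((a + b) / 2)) ≤ |a - b| * log 2 := by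
  rcases ha.eq_or_lt with rfl | ha
  · rcases hb.eq_or_lt with rfl | hb
    · simp
    · simp [div_div_eq_mul_div, hb.ne', abs_of_pos hb]
  rcases hb.eq_or_lt with rfl | hb
  · simp [div_div_eq_mul_div, ha.ne', abs_of_pos ha]
  have hs : 0 < a + b := by positivity
  have key := log_two_mul_one_sub_abs_le_binEntropy (u := a / (a + b)) (by positivity)
    (div_le_one_of_le₀ (by linarith) hs.le)
  have h1 : 1 - a / (a + b) = b / (a + b) := by field_simp; ring
  have habs : (a + b) * |1 - 2 * (a / (a + b))| = |a - b| := by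
    rw [← abs_of_pos hs, ← abs_mul, abs_of_pos hs, ← abs_neg]; congr 1; field_simp; ring
  rw [binEntropy, h1, log_inv, log_inv] at key
  have ea : a / ((a + b) / 2) = 2 * (a / (a + b)) := by field_simp
  have eb : b / ((a + b) / 2) = 2 * (b / (a + b)) := by field_simp
  rw [ea, eb, log_mul two_ne_zero (by positivity), log_mul two_ne_zero (by positivity)]
  have e1 : (a + b) * (a / (a + b)) = a := by field_simp
  have e2 : (a + b) * (b / (a + b)) = b := by field_simp
  linear_combination mul_le_mul_of_nonneg_left key hs.le + log 2 * habs
    - log (a / (a + b)) * e1 - log (b / (a + b)) * e2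

lemma mul_abs_sub_add_mul_sqrt_le (u v : ℝ) {a b : ℝ} (ha : 0 ≤ a) (hb : 0 ≤ b) :
    u * |a - b| + v * (2 * √(a * b)) ≤ √(u ^ 2 + v ^ 2) * (a + b) := by
  have hx : |a - b| ^ 2 + (2 * √(a * b)) ^ 2 = (a + b) ^ 2 := by
    rw [sq_abs, mul_pow, sq_sqrt (mul_nonneg ha hb)]; ring
  calc _ ≤ |u * |a - b| + v * (2 * √(a * b))| := le_abs_self _
    _ ≤ √((u ^ 2 + v ^ 2) * (a + b) ^ 2) :=
        abs_le_sqrt (by nlinarith [sq_nonneg (u * (2 * √(a * b)) - v * |a - b|)])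
    _ = _ := by rw [sqrt_mul (by positivity), sqrt_sq (by positivity)]

lemma mul_log_div_mean_le {ι : Type*} [Fintype ι] (hι : 2 ≤ Fintype.card ι) {w : ι → ℝ}
    (hw : ∀ i, 0 ≤ w i) (i : ι) :
    w i * log (w i / ((1 / Fintype.card ι) * ∑ j, w j)) ≤ w i * log (Fintype.card ι / 2) +
      1 / (Fintype.card ι - 1) * ∑ j ∈ univ.erase i, w i * log (w i / ((w i + w j) / 2)) := by
  set q : ℝ := (Fintype.card ι : ℝ)
  have hq : 1 < q := by simp only [q]; exact_mod_cast hι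
  rcases (hw i).eq_or_lt with hi | hi
  · simp [← hi]
  have hS : w i ≤ ∑ j, w j := single_le_sum (fun j _ => hw j) (mem_univ i)
  have hS0 : 0 < ∑ j, w j := hi.trans_le hS
  have hmean : log (w i / ((∑ j, w j) / 2)) ≤
      (1 / (q - 1)) * ∑ j ∈ univ.erase i, log (w i / ((w i + w j) / 2)) := by
    have hcard : ((univ.erase i).card : ℝ) = q - 1 := by
      rw [card_erase_of_mem (mem_univ i), card_univ, Nat.cast_sub (by omega)]; simp [q]
    have := card_nsmul_le_sum (univ.erase i) (fun j => log (w i / ((w i + w j) / 2)))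
      (log (w i / ((∑ j, w j) / 2))) fun j hj => by
        have hpair : w i + w j ≤ ∑ k, w k :=
          add_le_sum (fun k _ => hw k) (mem_univ i) (mem_univ j) (ne_of_mem_erase hj).symm
        exact log_le_log (div_pos hi (by linarith))
          (div_le_div_of_nonneg_left hi.le (by linarith [hw j]) (by linarith))
    rw [nsmul_eq_mul, hcard] at this
    rw [one_div_mul_eq_div, le_div_iff₀ (by linarith)]
    linarith
  have hsplit : w i / ((1 / q) * ∑ j, w j) = q / 2 * (w i / ((∑ j, w j) / 2)) := by
    field_simp
  rw [hsplit, log_mul (by linarith) (by positivity), mul_add, ← mul_sum]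
  linear_combination mul_le_mul_of_nonneg_left hmean hi.le

theorem sum_mul_log_div_mean_le {ι : Type*} [Fintype ι] (hι : 2 ≤ Fintype.card ι)
    {w : ι → ℝ} (hw : ∀ i, 0 ≤ w i) :
    ∑ i, w i * log (w i / ((1 / Fintype.card ι) * ∑ j, w j)) ≤
      (∑ i, w i) * log (Fintype.card ι / 2) +
        log 2 / (Fintype.card ι - 1) * ∑ p ∈ univ.offDiag, |w p.1 - w p.2| / 2 := by
  set q : ℝ := (Fintype.card ι : ℝ)
  have hq : 1 < q := by simp only [q]; exact_mod_cast hι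
  set g : ι × ι → ℝ := fun p => w p.1 * log (w p.1 / ((w p.1 + w p.2) / 2))
  have hsum : ∑ i, ∑ j ∈ univ.erase i, g (i, j) = ∑ p ∈ univ.offDiag, g p :=
    (sum_finset_product _ _ _ fun p => by simp [mem_offDiag, ne_comm]).symm
  have hswap : ∑ p ∈ univ.offDiag, g p.swap = ∑ p ∈ univ.offDiag, g p :=
    sum_equiv (Equiv.prodComm ι ι) (by simp [ne_comm]) fun _ _ => rfl
  calc _ ≤ ∑ i, (w i * log (q / 2) + 1 / (q - 1) * ∑ j ∈ univ.erase i, g (i, j)) :=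
        sum_le_sum fun i _ => mul_log_div_mean_le hι hw i
    _ = (∑ i, w i) * log (q / 2) +
          1 / (q - 1) * ∑ p ∈ univ.offDiag, (g p + g p.swap) / 2 := by
        rw [sum_add_distrib, ← sum_mul, ← mul_sum, hsum, ← sum_div, sum_add_distrib, hswap]
        ring
    _ ≤ (∑ i, w i) * log (q / 2) +
          1 / (q - 1) * ∑ p ∈ univ.offDiag, |w p.1 - w p.2| * log 2 / 2 := by
        have : 0 ≤ 1 / (q - 1) := by
          rw [one_div_nonneg]; linarith
        gcongr with p
        simpa [g, add_comm (w p.2)] using mul_log_div_add_mul_log_div_le (hw p.1) (hw p.2)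
    _ = _ := by
        rw [mul_sum, mul_sum]
        exact congrArg _ (sum_congr rfl fun p _ => by ring)

lemma mul_log_div_mem_Icc {a m c : ℝ} (ha : 0 ≤ a) (hc : 0 < c) (hac : a ≤ c * m) :
    a * log (a / m) ∈ Set.Icc (a - m) (a * log c) := by
  rcases ha.eq_or_lt with rfl | ha
  · simpa using nonneg_of_mul_nonneg_right hac hc
  have hm : 0 < m := pos_of_mul_pos_right (ha.trans_le hac) hc.le
  constructor
  · have := mul_le_mul_of_nonneg_left (self_sub_one_le_mul_log (div_nonneg ha.le hm.le)) hm.le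
    field_simp at this ⊢
    linarith
  · gcongr
    exact div_le_of_le_mul₀ hm.le hc.le hac

lemma summable_of_le_of_le {ι : Type*} {f g h : ι → ℝ} (hg : Summable g) (hh : Summable h)
    (hgf : ∀ i, g i ≤ f i) (hfh : ∀ i, f i ≤ h i) : Summable f := by
  have : Summable fun i => f i - g i :=
    .of_nonneg_of_le (fun i => sub_nonneg.2 (hgf i)) (fun i => sub_le_sub_right (hfh i) _)
      (hh.sub hg)
  simpa using this.add hg

section Channel

variable {X Y : Type*} {W : X → Y → ℝ}

def tvDist (W : X → Y → ℝ) (x x' : X) : ℝ :=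
  ∑' y, |W x y - W x' y| / 2

def avgTVDist [Fintype X] (W : X → Y → ℝ) : ℝ :=
  (1 / ((Fintype.card X : ℝ) * ((Fintype.card X : ℝ) - 1))) *
    ∑ p ∈ univ.offDiag, tvDist W p.1 p.2

namespace IsChannel

lemma summable (hW : IsChannel W) (x : X) : Summable (W x) := (hW.2 x).summable

lemma summable_abs_sub (hW : IsChannel W) (x x' : X) : Summable fun y => |W x y - W x' y| :=
  ((hW.summable x).add (hW.summable x')).of_norm_bounded fun y => by
    rw [norm_eq_abs, abs_abs, abs_sub_le_iff]
    constructor <;> linarith [hW.1 x y, hW.1 x' y]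

lemma summable_sqrt_mul_s2 (hW : IsChannel W) (x x' : X) :
    Summable fun y => √(W x y * W x' y) :=
  (((hW.summable x).add (hW.summable x')).div_const 2).of_nonneg_of_le (fun _ => sqrt_nonneg _)
    fun y => by
      have := mul_abs_sub_add_mul_sqrt_le 0 1 (hW.1 x y) (hW.1 x' y)
      norm_num at this
      linarith

lemma summable_mul_log_div_mean [Fintype X] (hW : IsChannel W) (x : X) :
    Summable fun y => W x y * log (W x y / ((1 / Fintype.card X) * ∑ x', W x' y)) := by
  have hq : (0 : ℝ) < Fintype.card X := by exact_mod_cast Fintype.card_pos_iff.2 ⟨x⟩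
  have hS : Summable fun y => ∑ x', W x' y := summable_sum fun x' _ => hW.summable x'
  have hbounds := fun y =>
    mul_log_div_mem_Icc (hW.1 x y) hq (m := (1 / Fintype.card X) * ∑ x', W x' y) (by
      rw [← mul_assoc, mul_one_div_cancel hq.ne', one_mul]
      exact single_le_sum (fun x' _ => hW.1 x' y) (mem_univ x))
  exact summable_of_le_of_le ((hW.summable x).sub (hS.mul_left _))
    ((hW.summable x).mul_right _) (fun y => (hbounds y).1) fun y => (hbounds y).2

end IsChannel

lemma tvDist_mul_add_Zb_le (hW : IsChannel W) (x x' : X) (u v : ℝ) :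
    u * tvDist W x x' + v * Zb W x x' ≤ √(u ^ 2 + v ^ 2) := by
  have htv := (hW.summable_abs_sub x x').div_const 2
  have hZ := hW.summable_sqrt_mul_s2 x x'
  have hsum := (hW.summable x).add (hW.summable x')
  calc u * tvDist W x x' + v * Zb W x x'
      = ∑' y, (u * (|W x y - W x' y| / 2) + v * √(W x y * W x' y)) := by
        rw [tvDist, Zb, ← tsum_mul_left, ← tsum_mul_left,
          (htv.mul_left u).tsum_add (hZ.mul_left v)]
    _ ≤ ∑' y, √(u ^ 2 + v ^ 2) / 2 * (W x y + W x' y) :=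
        ((htv.mul_left u).add (hZ.mul_left v)).tsum_le_tsum (fun y => by
          linarith [mul_abs_sub_add_mul_sqrt_le u v (hW.1 x y) (hW.1 x' y)]) (hsum.mul_left _)
    _ = √(u ^ 2 + v ^ 2) := by
        rw [tsum_mul_left, (hW.summable x).tsum_add (hW.summable x'), (hW.2 x).tsum_eq,
          (hW.2 x').tsum_eq]
        ring

lemma avgTVDist_mul_add_Zavg_le [Fintype X] (hq : 2 ≤ Fintype.card X) (hW : IsChannel W)
    (u v : ℝ) : u * avgTVDist W + v * Zavg W ≤ √(u ^ 2 + v ^ 2) := by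
  set q : ℝ := (Fintype.card X : ℝ)
  have hcard : ((univ : Finset X).offDiag.card : ℝ) = q * (q - 1) := by
    rw [offDiag_card, card_univ, Nat.cast_sub (Nat.le_mul_self _)]; push_cast; ring
  have hpos : 0 < q * (q - 1) := by
    have : (2 : ℝ) ≤ q := Nat.ofNat_le_cast.2 hq
    nlinarith
  calc u * avgTVDist W + v * Zavg W
      = 1 / (q * (q - 1)) * ∑ p ∈ univ.offDiag, (u * tvDist W p.1 p.2 + v * Zb W p.1 p.2) := by
        rw [avgTVDist, Zavg, sum_add_distrib, ← mul_sum, ← mul_sum]; ring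
    _ ≤ 1 / (q * (q - 1)) * ∑ p ∈ univ.offDiag, √(u ^ 2 + v ^ 2) := by
        gcongr with p; exact tvDist_mul_add_Zb_le hW p.1 p.2 u v
    _ = √(u ^ 2 + v ^ 2) := by
        rw [sum_const, nsmul_eq_mul, hcard, ← mul_assoc, one_div_mul_cancel hpos.ne', one_mul]

lemma avgTVDist_le_sqrt_one_sub_Zavg_sq [Fintype X] (hq : 2 ≤ Fintype.card X)
    (hW : IsChannel W) : avgTVDist W ≤ √(1 - Zavg W ^ 2) := by
  set D := avgTVDist W
  set Z := Zavg W
  have hr := sq_sqrt (add_nonneg (sq_nonneg D) (sq_nonneg Z))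
  have h := avgTVDist_mul_add_Zavg_le hq hW D Z
  have hr1 : √(D ^ 2 + Z ^ 2) ≤ 1 := by nlinarith [sqrt_nonneg (D ^ 2 + Z ^ 2)]
  exact (le_abs_self D).trans (abs_le_sqrt (by nlinarith [sqrt_nonneg (D ^ 2 + Z ^ 2)]))

theorem symCap_le_avgTVDist [Fintype X] (hq : 2 ≤ Fintype.card X) (hW : IsChannel W) :
    symCap W ≤ logb (Fintype.card X) ((Fintype.card X : ℝ) / 2) +
      logb (Fintype.card X) 2 * avgTVDist W := by
  have hL := fun x => hW.summable_mul_log_div_mean x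
  set q : ℝ := (Fintype.card X : ℝ)
  have hq2 : (2 : ℝ) ≤ q := Nat.ofNat_le_cast.2 hq
  have hlog : 0 < log q := log_pos (by linarith)
  have hD := fun p : X × X => (hW.summable_abs_sub p.1 p.2).div_const 2
  have hS : Summable fun y => ∑ x, W x y := summable_sum fun x _ => hW.summable x
  have hSq : ∑' y, ∑ x, W x y = q := by
    simp [Summable.tsum_finsetSum fun x _ => hW.summable x, (hW.2 _).tsum_eq, q]
  have hR : Summable fun y => (∑ x, W x y) * log (q / 2) +
      log 2 / (q - 1) * ∑ p ∈ univ.offDiag, |W p.1 y - W p.2 y| / 2 :=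
    (hS.mul_right _).add ((summable_sum fun p _ => hD p).mul_left _)
  calc symCap W
      = ∑ x, ∑' y, W x y * log (W x y / ((1 / q) * ∑ x', W x' y)) / (q * log q) := by
        simp only [symCap, logb]
        exact sum_congr rfl fun x _ => tsum_congr fun y => by ring
    _ = (∑' y, ∑ x, W x y * log (W x y / ((1 / q) * ∑ x', W x' y))) / (q * log q) := by
        rw [Summable.tsum_finsetSum fun x _ => hL x, sum_div]
        simp_rw [tsum_div_const]
    _ ≤ (∑' y, ((∑ x, W x y) * log (q / 2) +
          log 2 / (q - 1) * ∑ p ∈ univ.offDiag, |W p.1 y - W p.2 y| / 2)) / (q * log q) := by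
        refine div_le_div_of_nonneg_right ?_ (mul_pos (by linarith) hlog).le
        exact (summable_sum fun x _ => hL x).tsum_le_tsum
          (fun y => sum_mul_log_div_mean_le hq fun x => hW.1 x y) hR
    _ = _ := by
        rw [(hS.mul_right _).tsum_add ((summable_sum fun p _ => hD p).mul_left _),
          tsum_mul_right, tsum_mul_left, Summable.tsum_finsetSum fun p _ => hD p, hSq]
        simp only [avgTVDist, tvDist, logb]
        field_simp
        ring

end Channel

theorem symCap_le_of_bhattacharyya_general {X Y : Type*} [Fintype X]
    (hq : 2 ≤ Fintype.card X) (W : X → Y → ℝ) (hW : IsChannel W) :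
    symCap W ≤ Real.logb (Fintype.card X) ((Fintype.card X : ℝ) / 2) +
      Real.logb (Fintype.card X) 2 * Real.sqrt (1 - Zavg W ^ 2) := by
  calc symCap W ≤ logb (Fintype.card X) ((Fintype.card X : ℝ) / 2) +
        logb (Fintype.card X) 2 * avgTVDist W := symCap_le_avgTVDist hq hW
    _ ≤ _ := by
        have : (1 : ℝ) < Fintype.card X := by exact_mod_cast hq
        gcongr
        exacts [logb_nonneg this one_le_two, avgTVDist_le_sqrt_one_sub_Zavg_sq hq hW]

/-- `I(W) ≤ log_q (q/2) + (log_q 2) √(1 - Z(W)²)`. -/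
theorem symCap_le_of_bhattacharyya {X Y : Type*} [Fintype X] [Countable Y]
    (hq : 2 ≤ Fintype.card X) (W : X → Y → ℝ) (hW : IsChannel W) :
    symCap W ≤ Real.logb (Fintype.card X) ((Fintype.card X : ℝ) / 2) +
      Real.logb (Fintype.card X) 2 * Real.sqrt (1 - Zavg W ^ 2) :=
  symCap_le_of_bhattacharyya_general hq W hW

end Polar
end
end

section
/- For any q-ary discrete memoryless channel W, the symmetric capacity satisfies I(W) ≤ 2(q−1)·(log_q e)·√(1 − Z(W)²). -/
/-!
Bounding `log t ≤ t - 1` in each term of `I(W)` reduces the capacity, output by output, to a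
χ²-type sum: with `P(y) = (1/q) ∑ₓ W(y|x)`,
`∑ₓ (W(y|x)² / P(y) - W(y|x)) = ∑_{x ≠ x'} (W(y|x) - W(y|x'))² / (2 q P(y))`,
and `(a - b)² ≤ 2 (a + b) (√a - √b)²` bounds this by `∑_{x ≠ x'} (√W(y|x) - √W(y|x'))²`.
Summed over `y` these are the squared Hellinger distances `2 - 2 Z_{x,x'}(W)`, whence
`I(W) ≤ 2 (q - 1) (log_q e) (1 - Z(W))`; finally `1 - Z ≤ √(1 - Z²)` as `0 ≤ Z ≤ 1`.
-/

open MeasureTheory Filter Real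
open scoped Classical

noncomputable section

namespace Polar

theorem sq_sub_le_two_mul_add_mul_sq_sqrt_sub {a b : ℝ} (ha : 0 ≤ a) (hb : 0 ≤ b) :
    (a - b) ^ 2 ≤ 2 * (a + b) * (√a - √b) ^ 2 := by
  have hfac : a - b = (√a + √b) * (√a - √b) := by rw [← sq_sub_sq, sq_sqrt ha, sq_sqrt hb]
  have hsum : (√a + √b) ^ 2 ≤ 2 * (a + b) := by
    nlinarith [sq_nonneg (√a - √b), sq_sqrt ha, sq_sqrt hb]
  rw [hfac, mul_pow]
  exact mul_le_mul_of_nonneg_right hsum (sq_nonneg _)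

theorem sum_offDiag_sq_sub {ι R : Type*} [CommRing R] [DecidableEq ι] (s : Finset ι)
    (f : ι → R) :
    ∑ p ∈ s.offDiag, (f p.1 - f p.2) ^ 2 =
      2 * (s.card * ∑ i ∈ s, f i ^ 2 - (∑ i ∈ s, f i) ^ 2) := by
  have hdiag : ∑ p ∈ s.diag, (f p.1 - f p.2) ^ 2 = 0 :=
    Finset.sum_eq_zero fun p hp => by simp [(Finset.mem_diag.mp hp).2]
  rw [← zero_add (∑ p ∈ s.offDiag, _), ← hdiag,
    ← Finset.sum_union (Finset.disjoint_diag_offDiag s), Finset.diag_union_offDiag,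
    Finset.sum_product]
  simp only [sub_sq, Finset.sum_add_distrib, Finset.sum_sub_distrib, Finset.sum_const,
    nsmul_eq_mul, ← Finset.mul_sum, ← Finset.sum_mul]
  ring

theorem cast_card_offDiag {ι R : Type*} [CommRing R] [DecidableEq ι] (s : Finset ι) :
    (s.offDiag.card : R) = s.card * (s.card - 1) := by
  rw [Finset.offDiag_card, Nat.cast_sub (Nat.le_mul_self _)]
  push_cast
  ring

theorem sum_mul_div_sub_le_sum_offDiag {X : Type*} [Fintype X] [DecidableEq X] (a : X → ℝ)
    (ha : ∀ x, 0 ≤ a x) (hS : 0 < ∑ x, a x) :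
    ∑ x, (a x * (a x / (1 / (Fintype.card X : ℝ) * ∑ x', a x')) - a x) ≤
      ∑ p ∈ Finset.univ.offDiag, (√(a p.1) - √(a p.2)) ^ 2 := by
  set S := ∑ x, a x
  have hpair : ∀ p ∈ (Finset.univ : Finset X).offDiag, a p.1 + a p.2 ≤ S := by
    intro p hp
    rw [← Finset.sum_pair (Finset.mem_offDiag.mp hp).2.2]
    exact Finset.sum_le_sum_of_subset_of_nonneg (Finset.subset_univ _) fun i _ _ => ha i
  calc ∑ x, (a x * (a x / (1 / (Fintype.card X : ℝ) * S)) - a x)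
      = ∑ p ∈ Finset.univ.offDiag, (a p.1 - a p.2) ^ 2 / (2 * S) := by
        have hterm : ∀ x, a x * (a x / (1 / (Fintype.card X : ℝ) * S)) - a x =
            (Fintype.card X * a x ^ 2 - S * a x) / S := fun x => by field_simp
        rw [Finset.sum_congr rfl fun x _ => hterm x, ← Finset.sum_div, ← Finset.sum_div,
          sum_offDiag_sq_sub, Finset.sum_sub_distrib, ← Finset.mul_sum, ← Finset.mul_sum,
          Finset.card_univ]
        field_simp
        ring
    _ ≤ ∑ p ∈ Finset.univ.offDiag, (√(a p.1) - √(a p.2)) ^ 2 := by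
        refine Finset.sum_le_sum fun p hp => (div_le_iff₀' (by positivity)).mpr ?_
        calc (a p.1 - a p.2) ^ 2 ≤ 2 * (a p.1 + a p.2) * (√(a p.1) - √(a p.2)) ^ 2 :=
              sq_sub_le_two_mul_add_mul_sq_sqrt_sub (ha _) (ha _)
          _ ≤ 2 * S * (√(a p.1) - √(a p.2)) ^ 2 := by gcongr; exact hpair p hp

theorem mul_log_div_le_mul_div_sub {w p : ℝ} (hw : 0 ≤ w) (hp : 0 < p) :
    w * log (w / p) ≤ w * (w / p) - w := by
  rcases hw.eq_or_lt with rfl | hw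
  · simp
  · nlinarith [log_le_sub_one_of_pos (div_pos hw hp)]

theorem sub_le_mul_log_div {w p : ℝ} (hw : 0 ≤ w) (hp : 0 < p) : w - p ≤ w * log (w / p) := by
  rcases hw.eq_or_lt with rfl | hw
  · simp [hp.le]
  · have h := one_sub_inv_le_log_of_pos (div_pos hw hp)
    rw [inv_div] at h
    have : w * (1 - p / w) = w - p := by field_simp
    nlinarith

theorem mul_log_div_le_mul_log {w p k : ℝ} (hw : 0 ≤ w) (hp : 0 < p) (hwp : w ≤ k * p) :
    w * log (w / p) ≤ w * log k := by
  rcases hw.eq_or_lt with rfl | hw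
  · simp
  · exact mul_le_mul_of_nonneg_left
      (log_le_log (div_pos hw hp) ((div_le_iff₀ hp).mpr hwp)) hw.le

theorem one_div_mul_mul_logb (q w t : ℝ) :
    1 / q * w * logb q t = 1 / (q * log q) * (w * log t) := by
  rw [logb]; ring

theorem sum_mul_logb_le_sum_offDiag {X : Type*} [Fintype X] [DecidableEq X]
    (hq : 2 ≤ Fintype.card X) (a : X → ℝ) (ha : ∀ x, 0 ≤ a x) :
    ∑ x, 1 / (Fintype.card X : ℝ) * a x *
        logb (Fintype.card X) (a x / (1 / (Fintype.card X : ℝ) * ∑ x', a x')) ≤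
      1 / (Fintype.card X * log (Fintype.card X)) *
        ∑ p ∈ Finset.univ.offDiag, (√(a p.1) - √(a p.2)) ^ 2 := by
  have hq1 : (1 : ℝ) < Fintype.card X := by exact_mod_cast hq
  have hc : 0 ≤ 1 / ((Fintype.card X : ℝ) * log (Fintype.card X)) := by
    have := log_pos hq1; positivity
  rcases (Finset.sum_nonneg fun x _ => ha x).eq_or_lt with hS | hS
  · have ha0 : ∀ x, a x = 0 :=
      fun x => (Finset.sum_eq_zero_iff_of_nonneg fun x _ => ha x).mp hS.symm x
        (Finset.mem_univ x)
    simp only [ha0, mul_zero, zero_mul, Finset.sum_const_zero]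
    exact mul_nonneg hc (Finset.sum_nonneg fun p _ => sq_nonneg _)
  · have hP : 0 < 1 / (Fintype.card X : ℝ) * ∑ x', a x' := by positivity
    simp only [one_div_mul_mul_logb, ← Finset.mul_sum]
    gcongr
    calc ∑ x, a x * log (a x / (1 / (Fintype.card X : ℝ) * ∑ x', a x'))
        ≤ ∑ x, (a x * (a x / (1 / (Fintype.card X : ℝ) * ∑ x', a x')) - a x) :=
          Finset.sum_le_sum fun x _ => mul_log_div_le_mul_div_sub (ha x) hP
      _ ≤ _ := sum_mul_div_sub_le_sum_offDiag a ha hS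

theorem hasSum_sq_sqrt_sub_sqrt {Y : Type*} {f g : Y → ℝ} {a b : ℝ} (hf : ∀ y, 0 ≤ f y)
    (hg : ∀ y, 0 ≤ g y) (hfa : HasSum f a) (hgb : HasSum g b) :
    HasSum (fun y => (√(f y) - √(g y)) ^ 2) (a + b - 2 * ∑' y, √(f y * g y)) := by
  have hsq : ∀ y, (√(f y) - √(g y)) ^ 2 = f y + g y - 2 * √(f y * g y) := fun y => by
    rw [sub_sq, sq_sqrt (hf y), sq_sqrt (hg y), sqrt_mul (hf y)]; ring
  have hsummable : Summable fun y => √(f y * g y) := by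
    refine Summable.of_nonneg_of_le (fun y => sqrt_nonneg _) (fun y => ?_)
      ((hfa.summable.add hgb.summable).div_const 2)
    rw [sqrt_mul (hf y)]
    nlinarith [two_mul_le_add_sq (√(f y)) (√(g y)), sq_sqrt (hf y), sq_sqrt (hg y)]
  simp only [hsq]
  exact (hfa.add hgb).sub (hsummable.hasSum.mul_left 2)

theorem summable_of_le_of_le_s3 {Y : Type*} {f l u : Y → ℝ} (hlf : ∀ y, l y ≤ f y)
    (hfu : ∀ y, f y ≤ u y) (hl : Summable l) (hu : Summable u) : Summable f := by
  have : Summable fun y => f y - l y :=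
    Summable.of_nonneg_of_le (fun y => sub_nonneg.mpr (hlf y))
      (fun y => sub_le_sub_right (hfu y) _) (hu.sub hl)
  simpa using this.add hl

section Channel

variable {X Y : Type*} {W : X → Y → ℝ}

theorem IsChannel.hasSum_sq_sqrt_sub (hW : IsChannel W) (x x' : X) :
    HasSum (fun y => (√(W x y) - √(W x' y)) ^ 2) (2 - 2 * Zb W x x') := by
  convert hasSum_sq_sqrt_sub_sqrt (hW.1 x) (hW.1 x') (hW.2 x) (hW.2 x') using 1
  rw [Zb]; ring

theorem IsChannel.Zb_le_one (hW : IsChannel W) (x x' : X) : Zb W x x' ≤ 1 := by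
  have := (hW.hasSum_sq_sqrt_sub x x').nonneg fun _ => sq_nonneg _
  linarith

theorem Zavg_eq_sum_div_card [Fintype X] (W : X → Y → ℝ) :
    Zavg W =
      (∑ p ∈ Finset.univ.offDiag, Zb W p.1 p.2) / (Finset.univ : Finset X).offDiag.card := by
  rw [Zavg, cast_card_offDiag, Finset.card_univ, one_div_mul_eq_div]

theorem Zavg_nonneg [Fintype X] (W : X → Y → ℝ) : 0 ≤ Zavg W := by
  rw [Zavg_eq_sum_div_card]
  exact div_nonneg (Finset.sum_nonneg fun p _ => tsum_nonneg fun _ => sqrt_nonneg _)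
    (Nat.cast_nonneg _)

theorem IsChannel.Zavg_le_one [Fintype X] (hW : IsChannel W) : Zavg W ≤ 1 := by
  rw [Zavg_eq_sum_div_card]
  refine div_le_one_of_le₀ ?_ (Nat.cast_nonneg _)
  simpa only [nsmul_one] using
    Finset.sum_le_card_nsmul Finset.univ.offDiag _ 1 fun p _ => hW.Zb_le_one p.1 p.2

theorem sum_offDiag_Zb [Fintype X] (hq : 2 ≤ Fintype.card X) (W : X → Y → ℝ) :
    ∑ p ∈ Finset.univ.offDiag, Zb W p.1 p.2 =
      Fintype.card X * (Fintype.card X - 1) * Zavg W := by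
  have hcard : ((Finset.univ : Finset X).offDiag.card : ℝ) ≠ 0 := by
    rw [Nat.cast_ne_zero, Finset.offDiag_card, Finset.card_univ]
    exact Nat.sub_ne_zero_of_lt (by nlinarith)
  rw [Zavg_eq_sum_div_card, ← Finset.card_univ, ← cast_card_offDiag, mul_div_cancel₀ _ hcard]

theorem IsChannel.summable_symCap_term [Fintype X] (hW : IsChannel W) (x : X) :
    Summable fun y => 1 / (Fintype.card X : ℝ) * W x y *
      logb (Fintype.card X) (W x y / (1 / (Fintype.card X : ℝ) * ∑ x', W x' y)) := by
  have hq : (0 : ℝ) < Fintype.card X := by exact_mod_cast Fintype.card_pos_iff.mpr ⟨x⟩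
  set q : ℝ := (Fintype.card X : ℝ)
  set P : Y → ℝ := fun y => 1 / q * ∑ x', W x' y
  have hP : ∀ y, 0 ≤ P y := fun y =>
    mul_nonneg (by positivity) (Finset.sum_nonneg fun x' _ => hW.1 x' y)
  have hWP : ∀ y, W x y ≤ q * P y := fun y => by
    simpa [P, hq.ne'] using Finset.single_le_sum (fun x' _ => hW.1 x' y) (Finset.mem_univ x)
  have hW0 : ∀ y, P y = 0 → W x y = 0 := fun y hP0 =>
    le_antisymm (by simpa [hP0] using hWP y) (hW.1 x y)
  simp only [one_div_mul_mul_logb]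
  refine Summable.mul_left _ (summable_of_le_of_le_s3 (l := fun y => W x y - P y)
    (u := fun y => W x y * log q) (fun y => ?_) (fun y => ?_) ?_ ?_)
  · rcases (hP y).eq_or_lt with hP0 | hP0
    · simp [hW0 y hP0.symm, ← hP0]
    · exact sub_le_mul_log_div (hW.1 x y) hP0
  · rcases (hP y).eq_or_lt with hP0 | hP0
    · simp [hW0 y hP0.symm]
    · exact mul_log_div_le_mul_log (hW.1 x y) hP0 (hWP y)
  · exact (hW.2 x).summable.sub ((summable_sum fun x' _ => (hW.2 x').summable).mul_left _)
  · exact (hW.2 x).summable.mul_right _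

theorem IsChannel.symCap_le_sum_offDiag [Fintype X] (hW : IsChannel W)
    (hq : 2 ≤ Fintype.card X) :
    symCap W ≤ 1 / (Fintype.card X * log (Fintype.card X)) *
      ∑ p ∈ Finset.univ.offDiag, (2 - 2 * Zb W p.1 p.2) :=
  hasSum_le (fun y => sum_mul_logb_le_sum_offDiag hq (W · y) (hW.1 · y))
    (hasSum_sum fun x _ => (hW.summable_symCap_term x).hasSum)
    ((hasSum_sum fun p _ => hW.hasSum_sq_sqrt_sub p.1 p.2).mul_left _)

end Channel

theorem one_sub_le_sqrt_one_sub_sq {z : ℝ} (hz0 : 0 ≤ z) (hz1 : z ≤ 1) :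
    1 - z ≤ √(1 - z ^ 2) :=
  le_sqrt_of_sq_le (by nlinarith)

theorem symCap_le_of_bhattacharyya'_general {X Y : Type*} [Fintype X]
    (hq : 2 ≤ Fintype.card X) (W : X → Y → ℝ) (hW : IsChannel W) :
    symCap W ≤ 2 * ((Fintype.card X : ℝ) - 1) *
      Real.logb (Fintype.card X) (Real.exp 1) * Real.sqrt (1 - Zavg W ^ 2) := by
  have hq1 : (1 : ℝ) < Fintype.card X := by exact_mod_cast hq
  have hlog : 0 < log (Fintype.card X) := log_pos hq1
  have hcoef : 0 ≤ 2 * ((Fintype.card X : ℝ) - 1) * logb (Fintype.card X) (exp 1) := by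
    rw [logb, log_exp]
    exact mul_nonneg (by linarith) (by positivity)
  calc symCap W ≤ 1 / (Fintype.card X * log (Fintype.card X)) *
        ∑ p ∈ Finset.univ.offDiag, (2 - 2 * Zb W p.1 p.2) := hW.symCap_le_sum_offDiag hq
    _ = 2 * ((Fintype.card X : ℝ) - 1) * logb (Fintype.card X) (exp 1) * (1 - Zavg W) := by
        rw [Finset.sum_sub_distrib, ← Finset.mul_sum, sum_offDiag_Zb hq, Finset.sum_const,
          nsmul_eq_mul, cast_card_offDiag, Finset.card_univ, logb, log_exp]
        field_simp
    _ ≤ _ := mul_le_mul_of_nonneg_left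
        (one_sub_le_sqrt_one_sub_sq (Zavg_nonneg W) hW.Zavg_le_one) hcoef

/-- `I(W) ≤ 2(q-1) (log_q e) √(1 - Z(W)²)`. -/
theorem symCap_le_of_bhattacharyya' {X Y : Type*} [Fintype X] [Countable Y]
    (hq : 2 ≤ Fintype.card X) (W : X → Y → ℝ) (hW : IsChannel W) :
    symCap W ≤ 2 * ((Fintype.card X : ℝ) - 1) *
      Real.logb (Fintype.card X) (Real.exp 1) * Real.sqrt (1 - Zavg W ^ 2) :=
  symCap_le_of_bhattacharyya'_general hq W hW

end Polar
end
end

section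
/- Let W be a q-ary DMC, let σ and τ be permutations of 𝒳, and define the channel W'(y₁,y₂|x) := W(y₁|σ(x))·W(y₂|τ(x)) with output alphabet 𝒴². Then I(W') − I(W) ≥ −log_q[ 1 − (1/q²) Σ_{z∈𝒳} Σ_{x∈𝒳} Z_{z,x}(W)² · (1 − Z_{τ(σ⁻¹(z)),τ(σ⁻¹(x))}(W)) ]. -/
/-! Reindexing the inputs by `σ` reduces the claim to the channel `W'(y₁, y₂ | x) = W(y₁|x) b(y₂|x)`
with `b = W ∘ τ ∘ σ⁻¹`. By the chain rule, `I(W') - I(W)` is the conditional mutual information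
`E log_q (b(y₂|x) S₁(y₁) / S(y₁, y₂))`, where `S₁` and `S` are the column sums of `W` and `W'`.
Jensen's inequality for `log`, applied to the square root of the inverse ratio, bounds it below by
`-log_q` of `(E √(S / (b S₁)))²`. Summing over `x` first and applying Cauchy–Schwarz over `(y₁, y₂)`
bounds that square by `q⁻¹ ∑ T(x, x') Z_b(x, x')`, where `T(x, x') = ∑_y W(y|x) W(y|x') / S₁(y)`.
Finally `∑ T = q` and `Z_W(x, x')² ≤ q T(x, x')` (Cauchy–Schwarz again) give the bound. -/

open MeasureTheory Filter Real
open scoped Classical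

noncomputable section

theorem hasSum_prod_of_fintype {α ι κ : Type*} [AddCommMonoid α] [TopologicalSpace α]
    [ContinuousAdd α] [Fintype ι] {f : ι → κ → α} {a : ι → α} (h : ∀ i, HasSum (f i) (a i)) :
    HasSum (fun p : ι × κ => f p.1 p.2) (∑ i, a i) := by
  convert hasSum_sum fun i _ => (hasSum_extend_zero (Prod.mk_right_injective i)).2 (h i)
    with ⟨i, k⟩
  show f i k = _
  rw [Finset.sum_eq_single i (fun j _ hji => ?_) (by simp)]
  · exact ((Prod.mk_right_injective i).extend_apply _ _ k).symm
  · refine Function.extend_apply' _ _ _ ?_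
    rintro ⟨k', hk'⟩
    exact hji (congrArg Prod.fst hk')

theorem HasSum.mul_real {α β : Type*} {f : α → ℝ} {g : β → ℝ} {s t : ℝ}
    (hf : HasSum f s) (hg : HasSum g t) : HasSum (fun p : α × β => f p.1 * g p.2) (s * t) :=
  hf.mul hg <| summable_mul_of_summable_norm (summable_abs_iff.2 hf.summable)
    (summable_abs_iff.2 hg.summable)

theorem summable_and_tsum_sqrt_mul_le {ι : Type*} {u v : ι → ℝ} (hu0 : ∀ i, 0 ≤ u i)
    (hv0 : ∀ i, 0 ≤ v i) (hu : Summable u) (hv : Summable v) :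
    Summable (fun i => √(u i * v i)) ∧ ∑' i, √(u i * v i) ≤ √(∑' i, u i) * √(∑' i, v i) := by
  have hsq : ∀ {w : ι → ℝ}, (∀ i, 0 ≤ w i) → (fun i => √(w i) ^ (2 : ℝ)) = w := fun hw0 =>
    funext fun i => by rw [rpow_two, sq_sqrt (hw0 i)]
  have := summable_and_inner_le_Lp_mul_Lq_tsum_of_nonneg HolderConjugate.two_two
    (fun i => sqrt_nonneg (u i)) (fun i => sqrt_nonneg (v i))
    (by rwa [hsq hu0]) (by rwa [hsq hv0])
  simp only [hsq hu0, hsq hv0, ← sqrt_eq_rpow, ← sqrt_mul (hu0 _)] at this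
  exact this

theorem summable_mul_log_div {κ : Type*} {w S : κ → ℝ} (hw0 : ∀ k, 0 ≤ w k)
    (hwS : ∀ k, w k ≤ S k) (hS : Summable S) : Summable fun k => w k * log (w k / S k) := by
  refine hS.of_norm_bounded fun k => ?_
  rcases (hw0 k).eq_or_lt with hw | hw
  · simp [← hw, (hw0 k).trans (hwS k)]
  have hSk : 0 < S k := hw.trans_le (hwS k)
  have hx : |log (w k / S k) * (w k / S k)| < 1 :=
    abs_log_mul_self_lt _ (by positivity) ((div_le_one hSk).2 (hwS k))
  have h : w k * log (w k / S k) = S k * (log (w k / S k) * (w k / S k)) := by field_simp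
  rw [h, norm_mul, Real.norm_of_nonneg hSk.le, Real.norm_eq_abs]
  exact mul_le_of_le_one_right hSk.le hx.le

theorem tsum_mul_log_le_log {ι : Type*} {p t : ι → ℝ} {B : ℝ} (hp0 : ∀ i, 0 ≤ p i)
    (hp1 : HasSum p 1) (hpt : ∀ i, p i ≠ 0 → 0 < t i) (hpt_sum : Summable fun i => p i * t i)
    (hlog : Summable fun i => p i * log (t i)) (hB : ∑' i, p i * t i ≤ B) :
    ∑' i, p i * log (t i) ≤ log B := by
  set C := ∑' i, p i * t i
  have hpt0 : ∀ i, 0 ≤ p i * t i := fun i => by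
    rcases eq_or_ne (p i) 0 with h | h
    · simp [h]
    · exact mul_nonneg (hp0 i) (hpt i h).le
  obtain ⟨i, hi⟩ : ∃ i, p i ≠ 0 := by
    by_contra! h
    exact one_ne_zero (hp1.unique (by simp [funext h]))
  have hC : 0 < C :=
    (mul_pos ((hp0 i).lt_of_ne' hi) (hpt i hi)).trans_le (hpt_sum.le_tsum i fun j _ => hpt0 j)
  -- `log t ≤ log C + (t / C - 1)` termwise, and the right side sums to `log C`
  have hbound : HasSum (fun i => p i * t i / C - p i + p i * log C) (log C) := by
    have := ((hpt_sum.hasSum.div_const C).sub hp1).add (hp1.mul_right (log C))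
    rwa [div_self hC.ne', sub_self, one_mul, zero_add] at this
  refine (hasSum_le (fun j => ?_) hlog.hasSum hbound).trans (log_le_log hC hB)
  rcases eq_or_ne (p j) 0 with h | h
  · simp [h]
  have htj := hpt j h
  have := log_le_sub_one_of_pos (div_pos htj hC)
  rw [log_div htj.ne' hC.ne'] at this
  have := mul_le_mul_of_nonneg_left this (hp0 j)
  calc p j * log (t j) ≤ p j * (t j / C - 1 + log C) := by linarith
    _ = _ := by ring

namespace Polar

section

variable {X X' Y : Type*}

def prodChannel (a b : X → Y → ℝ) (x : X) (p : Y × Y) : ℝ := a x p.1 * b x p.2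

theorem Zb_nonneg (W : X → Y → ℝ) (x x' : X) : 0 ≤ Zb W x x' :=
  tsum_nonneg fun _ => sqrt_nonneg _

namespace IsChannel

variable {W a b : X → Y → ℝ}

theorem comp (hW : IsChannel W) (e : X' → X) : IsChannel fun x => W (e x) :=
  ⟨fun x => hW.1 (e x), fun x => hW.2 (e x)⟩

theorem prod (ha : IsChannel a) (hb : IsChannel b) : IsChannel (prodChannel a b) :=
  ⟨fun x p => mul_nonneg (ha.1 x p.1) (hb.1 x p.2),
    fun x => by
      have h := (ha.2 x).mul_real (hb.2 x)
      rwa [one_mul] at h⟩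

theorem summable_sqrt_mul_and_Zb_le_one (hW : IsChannel W) (x x' : X) :
    Summable (fun y => √(W x y * W x' y)) ∧ Zb W x x' ≤ 1 := by
  obtain ⟨hs, hle⟩ := summable_and_tsum_sqrt_mul_le (hW.1 x) (hW.1 x') (hW.2 x).summable
    (hW.2 x').summable
  rw [(hW.2 x).tsum_eq, (hW.2 x').tsum_eq, sqrt_one, one_mul] at hle
  exact ⟨hs, hle⟩

end IsChannel

end

section

variable {X Y : Type*} [Fintype X]

def outSum (W : X → Y → ℝ) (y : Y) : ℝ := ∑ x, W x y

def capTerm (W : X → Y → ℝ) (x : X) (y : Y) : ℝ :=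
  1 / (Fintype.card X : ℝ) * W x y *
    logb (Fintype.card X) (W x y / (1 / (Fintype.card X : ℝ) * outSum W y))

theorem symCap_eq_sum_tsum_capTerm (W : X → Y → ℝ) : symCap W = ∑ x, ∑' y, capTerm W x y := rfl

theorem symCap_comp_perm (e : Equiv.Perm X) (W : X → Y → ℝ) :
    symCap (fun x => W (e x)) = symCap W := by
  have hcol : ∀ y, ∑ x, W (e x) y = ∑ x, W x y := fun y => Equiv.sum_comp e (W · y)
  simp only [symCap, hcol]
  exact Equiv.sum_comp e (fun x => ∑' y, 1 / (Fintype.card X : ℝ) * W x y *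
    logb (Fintype.card X) (W x y / (1 / (Fintype.card X : ℝ) * ∑ x', W x' y)))

/-- `T(x, x') = ∑_y W(y|x) W(y|x') / ∑_z W(y|z)`; under uniform input, `T(x, x') / q` is the
probability that `x` is sent and `x'` is drawn from the posterior given the output. -/
def overlap (W : X → Y → ℝ) (x x' : X) : ℝ := ∑' y, W x y * W x' y / outSum W y

namespace IsChannel

variable {W : X → Y → ℝ}

theorem outSum_nonneg (hW : IsChannel W) (y : Y) : 0 ≤ outSum W y :=
  Finset.sum_nonneg fun x _ => hW.1 x y

theorem le_outSum (hW : IsChannel W) (x : X) (y : Y) : W x y ≤ outSum W y :=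
  Finset.single_le_sum (fun x _ => hW.1 x y) (Finset.mem_univ x)

theorem hasSum_outSum (hW : IsChannel W) : HasSum (outSum W) (Fintype.card X) := by
  unfold outSum
  simpa using hasSum_sum fun x (_ : x ∈ Finset.univ) => hW.2 x

theorem hasSum_joint [Nonempty X] (hW : IsChannel W) :
    HasSum (fun i : X × Y => 1 / (Fintype.card X : ℝ) * W i.1 i.2) 1 := by
  have h := hasSum_prod_of_fintype fun x => (hW.2 x).mul_left (1 / (Fintype.card X : ℝ))
  rwa [Finset.sum_const, Finset.card_univ, nsmul_eq_mul, mul_one,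
    mul_one_div_cancel (Nat.cast_pos.2 Fintype.card_pos).ne'] at h

theorem summable_capTerm (hW : IsChannel W) (x : X) : Summable (capTerm W x) := by
  set c : ℝ := (Fintype.card X : ℝ)
  have hc : 0 < c := Nat.cast_pos.2 (Fintype.card_pos_iff.2 ⟨x⟩)
  have hterm : ∀ y, capTerm W x y =
      1 / (c * log c) * (W x y * log (W x y / outSum W y) + log c * W x y) := fun y => by
    rcases (hW.1 x y).eq_or_lt with h | h
    · simp [capTerm, ← h]
    have hS := h.trans_le (hW.le_outSum x y)
    have harg : W x y / (1 / c * outSum W y) = W x y / outSum W y * c := by field_simp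
    rw [capTerm, logb, harg, log_mul (by positivity) hc.ne']
    ring
  exact (((summable_mul_log_div (hW.1 x) (hW.le_outSum x) hW.hasSum_outSum.summable).add
    ((hW.2 x).summable.mul_left _)).mul_left _).congr fun y => (hterm y).symm

theorem overlap_nonneg (hW : IsChannel W) (x x' : X) : 0 ≤ overlap W x x' :=
  tsum_nonneg fun y => div_nonneg (mul_nonneg (hW.1 x y) (hW.1 x' y)) (hW.outSum_nonneg y)

theorem summable_overlap (hW : IsChannel W) (x x' : X) :
    Summable fun y => W x y * W x' y / outSum W y := by
  refine (hW.2 x).summable.of_nonneg_of_le (fun y => div_nonneg (mul_nonneg (hW.1 x y)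
    (hW.1 x' y)) (hW.outSum_nonneg y)) fun y => ?_
  rw [mul_div_assoc]
  exact mul_le_of_le_one_right (hW.1 x y) (div_le_one_of_le₀ (hW.le_outSum x' y)
    (hW.outSum_nonneg y))

theorem sum_overlap (hW : IsChannel W) : ∑ x, ∑ x', overlap W x x' = Fintype.card X := by
  have hcol : ∀ y, ∑ x, ∑ x', W x y * W x' y / outSum W y = outSum W y := fun y => by
    rcases (hW.outSum_nonneg y).eq_or_lt with h | h
    · simp [← h]
    simp_rw [← Finset.sum_div, ← Finset.mul_sum, ← Finset.sum_mul]
    exact mul_div_cancel_right₀ _ h.ne'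
  have := hasSum_sum fun x (_ : x ∈ Finset.univ) =>
    hasSum_sum fun x' (_ : x' ∈ Finset.univ) => (hW.summable_overlap x x').hasSum
  simp only [hcol] at this
  exact this.unique hW.hasSum_outSum

theorem Zb_sq_le_card_mul_overlap (hW : IsChannel W) (x x' : X) :
    Zb W x x' ^ 2 ≤ Fintype.card X * overlap W x x' := by
  have hsqrt : ∀ y, √(W x y * W x' y / outSum W y * outSum W y) = √(W x y * W x' y) := fun y => by
    rcases (hW.outSum_nonneg y).eq_or_lt with h | h
    · simp [← h, (hW.le_outSum x y).antisymm (h ▸ hW.1 x y)]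
    rw [div_mul_cancel₀ _ h.ne']
  have hT0 : ∀ y, 0 ≤ W x y * W x' y / outSum W y := fun y =>
    div_nonneg (mul_nonneg (hW.1 x y) (hW.1 x' y)) (hW.outSum_nonneg y)
  have hle := (summable_and_tsum_sqrt_mul_le hT0 hW.outSum_nonneg (hW.summable_overlap x x')
    hW.hasSum_outSum.summable).2
  simp only [hsqrt, hW.hasSum_outSum.tsum_eq, ← sqrt_mul (tsum_nonneg hT0)] at hle
  rw [mul_comm]
  exact (le_sqrt (Zb_nonneg W x x') (mul_nonneg (tsum_nonneg hT0) (Nat.cast_nonneg _))).1 hle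

end IsChannel

variable {a b : X → Y → ℝ}

theorem IsChannel.hasSum_condInfo (ha : IsChannel a) (hb : IsChannel b) (x : X) :
    HasSum (fun p : Y × Y => 1 / (Fintype.card X : ℝ) * prodChannel a b x p *
        logb (Fintype.card X) (b x p.2 * outSum a p.1 / outSum (prodChannel a b) p))
      (∑' p, capTerm (prodChannel a b) x p - ∑' y, capTerm a x y) := by
  have hP := ha.prod hb
  have hc : 0 < (Fintype.card X : ℝ) := Nat.cast_pos.2 (Fintype.card_pos_iff.2 ⟨x⟩)
  have h := (hP.summable_capTerm x).hasSum.sub ((ha.summable_capTerm x).hasSum.mul_real (hb.2 x))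
  rw [mul_one] at h
  refine h.congr_fun fun p => ?_
  simp only [capTerm, prodChannel]
  rcases (ha.1 x p.1).eq_or_lt with h0 | ha0
  · simp [← h0]
  rcases (hb.1 x p.2).eq_or_lt with h0 | hb0
  · simp [← h0]
  have hSa : 0 < outSum a p.1 := ha0.trans_le (ha.le_outSum x p.1)
  have hSP : 0 < outSum (prodChannel a b) p := (mul_pos ha0 hb0).trans_le (hP.le_outSum x p)
  have hlog : logb (Fintype.card X) (b x p.2 * outSum a p.1 / outSum (prodChannel a b) p) =
      logb (Fintype.card X) (a x p.1 * b x p.2 /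
          (1 / (Fintype.card X : ℝ) * outSum (prodChannel a b) p)) -
        logb (Fintype.card X) (a x p.1 / (1 / (Fintype.card X : ℝ) * outSum a p.1)) := by
    rw [← logb_div (by positivity) (by positivity)]
    congr 1
    field_simp
  rw [hlog]
  ring

theorem symCap_prodChannel_sub (ha : IsChannel a) (hb : IsChannel b) :
    symCap (prodChannel a b) - symCap a =
      ∑ x, ∑' p : Y × Y, 1 / (Fintype.card X : ℝ) * prodChannel a b x p *
        logb (Fintype.card X) (b x p.2 * outSum a p.1 / outSum (prodChannel a b) p) := by
  simp only [symCap_eq_sum_tsum_capTerm, ← Finset.sum_sub_distrib,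
    (ha.hasSum_condInfo hb _).tsum_eq]

theorem sum_overlap_mul_Zb_le [Nonempty X] (ha : IsChannel a) (hb : IsChannel b) :
    ∑ x, ∑ x', 1 / (Fintype.card X : ℝ) * (overlap a x x' * Zb b x x') ≤
      1 - 1 / (Fintype.card X : ℝ) ^ 2 * ∑ x, ∑ x', Zb a x x' ^ 2 * (1 - Zb b x x') := by
  set c : ℝ := (Fintype.card X : ℝ)
  have hc : 0 < c := Nat.cast_pos.2 Fintype.card_pos
  have hT : ∑ x, ∑ x', 1 / c * overlap a x x' = 1 := by
    simp_rw [← Finset.mul_sum, ha.sum_overlap]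
    exact one_div_mul_cancel hc.ne'
  have hle : ∀ x x', 1 / c ^ 2 * (Zb a x x' ^ 2 * (1 - Zb b x x')) ≤
      1 / c * (overlap a x x' * (1 - Zb b x x')) := fun x x' => by
    have hZ := sub_nonneg.2 (hb.summable_sqrt_mul_and_Zb_le_one x x').2
    have hT := ha.Zb_sq_le_card_mul_overlap x x'
    calc 1 / c ^ 2 * (Zb a x x' ^ 2 * (1 - Zb b x x'))
        ≤ 1 / c ^ 2 * (c * overlap a x x' * (1 - Zb b x x')) := by gcongr
      _ = _ := by field_simp
  calc ∑ x, ∑ x', 1 / c * (overlap a x x' * Zb b x x')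
      = ∑ x, ∑ x', 1 / c * overlap a x x' -
          ∑ x, ∑ x', 1 / c * (overlap a x x' * (1 - Zb b x x')) := by
        simp only [← Finset.sum_sub_distrib]
        ring_nf
    _ ≤ 1 - ∑ x, ∑ x', 1 / c ^ 2 * (Zb a x x' ^ 2 * (1 - Zb b x x')) := by
        rw [hT]
        exact sub_le_sub_left
          (Finset.sum_le_sum fun x _ => Finset.sum_le_sum fun x' _ => hle x x') 1
    _ = 1 - 1 / c ^ 2 * ∑ x, ∑ x', Zb a x x' ^ 2 * (1 - Zb b x x') := by
        simp only [Finset.mul_sum]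

theorem sum_mul_sqrt_eq (ha : ∀ x y, 0 ≤ a x y) (hb : ∀ x y, 0 ≤ b x y) {c : ℝ} (hc : 0 ≤ c)
    (p : Y × Y) :
    ∑ x, c * prodChannel a b x p * √(outSum (prodChannel a b) p / (b x p.2 * outSum a p.1)) =
      √(c * outSum (prodChannel a b) p *
        ∑ x, ∑ x', c * (a x p.1 * a x' p.1 / outSum a p.1 * √(b x p.2 * b x' p.2))) := by
  set Sa := outSum a p.1
  set SP := outSum (prodChannel a b) p
  set G := ∑ x, a x p.1 * √(b x p.2)
  have hSa : 0 ≤ Sa := Finset.sum_nonneg fun x _ => ha x p.1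
  have hG : 0 ≤ G := Finset.sum_nonneg fun x _ => mul_nonneg (ha x p.1) (sqrt_nonneg _)
  have hV : ∑ x, ∑ x', c * (a x p.1 * a x' p.1 / Sa * √(b x p.2 * b x' p.2)) = c * G ^ 2 / Sa := by
    rw [sq, Finset.sum_mul_sum, Finset.mul_sum, Finset.sum_div]
    refine Finset.sum_congr rfl fun x _ => ?_
    rw [Finset.mul_sum, Finset.sum_div]
    refine Finset.sum_congr rfl fun x' _ => ?_
    rw [sqrt_mul (hb x p.2)]
    ring
  have hterm : ∀ x, c * prodChannel a b x p * √(SP / (b x p.2 * Sa)) =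
      c * √SP / √Sa * (a x p.1 * √(b x p.2)) := fun x => by
    rw [prodChannel, sqrt_div' _ (mul_nonneg (hb x p.2) hSa), sqrt_mul (hb x p.2)]
    conv_rhs => rw [← div_sqrt (x := b x p.2)]
    ring
  rw [Finset.sum_congr rfl fun x _ => hterm x, ← Finset.mul_sum, hV,
    show c * SP * (c * G ^ 2 / Sa) = (c * G) ^ 2 * (SP / Sa) by ring,
    sqrt_mul (sq_nonneg _), sqrt_sq (mul_nonneg hc hG), sqrt_div' _ hSa]
  ring

theorem hasSum_overlap_mul_Zb (ha : IsChannel a) (hb : IsChannel b) (c : ℝ) :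
    HasSum (fun p : Y × Y =>
        ∑ x, ∑ x', c * (a x p.1 * a x' p.1 / outSum a p.1 * √(b x p.2 * b x' p.2)))
      (∑ x, ∑ x', c * (overlap a x x' * Zb b x x')) :=
  hasSum_sum fun x _ => hasSum_sum fun x' _ => ((ha.summable_overlap x x').hasSum.mul_real
    (hb.summable_sqrt_mul_and_Zb_le_one x x').1.hasSum).mul_left c

theorem summable_and_tsum_mul_sqrt_le [Nonempty X] (ha : IsChannel a) (hb : IsChannel b) :
    Summable (fun i : X × (Y × Y) => 1 / (Fintype.card X : ℝ) * prodChannel a b i.1 i.2 *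
        √(outSum (prodChannel a b) i.2 / (b i.1 i.2.2 * outSum a i.2.1))) ∧
      ∑' i : X × (Y × Y), 1 / (Fintype.card X : ℝ) * prodChannel a b i.1 i.2 *
          √(outSum (prodChannel a b) i.2 / (b i.1 i.2.2 * outSum a i.2.1)) ≤
        √(∑ x, ∑ x', 1 / (Fintype.card X : ℝ) * (overlap a x x' * Zb b x x')) := by
  set c : ℝ := (Fintype.card X : ℝ)
  have hc : 0 ≤ 1 / c := by positivity
  have hP := ha.prod hb
  set w : X → Y × Y → ℝ := fun x p =>
    1 / c * prodChannel a b x p * √(outSum (prodChannel a b) p / (b x p.2 * outSum a p.1))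
  have hw0 : ∀ x p, 0 ≤ w x p := fun x p => mul_nonneg (mul_nonneg hc (hP.1 x p)) (sqrt_nonneg _)
  have hU := hP.hasSum_outSum.mul_left (1 / c)
  have hV := hasSum_overlap_mul_Zb ha hb (1 / c)
  obtain ⟨hs, hle⟩ := summable_and_tsum_sqrt_mul_le (fun p => mul_nonneg hc (hP.outSum_nonneg p))
    (fun p => Finset.sum_nonneg fun x _ => Finset.sum_nonneg fun x' _ => mul_nonneg hc
      (mul_nonneg (div_nonneg (mul_nonneg (ha.1 x p.1) (ha.1 x' p.1)) (ha.outSum_nonneg p.1))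
        (sqrt_nonneg _))) hU.summable hV.summable
  have hsum : ∀ p, ∑ x, w x p = _ := sum_mul_sqrt_eq ha.1 hb.1 hc
  have hfib : ∀ x, Summable (w x) := fun x => hs.of_nonneg_of_le (hw0 x) fun p =>
    hsum p ▸ Finset.single_le_sum (fun x _ => hw0 x p) (Finset.mem_univ x)
  have hflat := hasSum_prod_of_fintype fun x => (hfib x).hasSum
  refine ⟨hflat.summable, ?_⟩
  rw [hflat.tsum_eq, ← Summable.tsum_finsetSum fun x _ => hfib x, tsum_congr hsum]
  refine hle.trans_eq ?_
  rw [hU.tsum_eq, hV.tsum_eq, one_div_mul_cancel (Nat.cast_pos.2 Fintype.card_pos).ne', sqrt_one,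
    one_mul]

theorem neg_logb_le_condInfo (hc : 1 < (Fintype.card X : ℝ)) (ha : IsChannel a)
    (hb : IsChannel b) {B : ℝ}
    (hB : ∑ x, ∑ x', 1 / (Fintype.card X : ℝ) * (overlap a x x' * Zb b x x') ≤ B) :
    -logb (Fintype.card X) B ≤ ∑ x, ∑' p : Y × Y, 1 / (Fintype.card X : ℝ) * prodChannel a b x p *
        logb (Fintype.card X) (b x p.2 * outSum a p.1 / outSum (prodChannel a b) p) := by
  set c : ℝ := (Fintype.card X : ℝ)
  have : Nonempty X := Fintype.card_pos_iff.1 (Nat.cast_pos.1 (one_pos.trans hc))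
  have hL : 0 < log c := log_pos hc
  have hP := ha.prod hb
  set u : X × (Y × Y) → ℝ := fun i => 1 / c * prodChannel a b i.1 i.2
  set r : X × (Y × Y) → ℝ := fun i => outSum (prodChannel a b) i.2 / (b i.1 i.2.2 * outSum a i.2.1)
  have hcond := hasSum_prod_of_fintype fun x => (ha.hasSum_condInfo hb x).summable.hasSum
  have hterm : ∀ i : X × (Y × Y), 1 / c * prodChannel a b i.1 i.2 *
      logb c (b i.1 i.2.2 * outSum a i.2.1 / outSum (prodChannel a b) i.2) =
        -(2 / log c) * (u i * log √(r i)) := fun i => by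
    rw [log_sqrt (div_nonneg (hP.outSum_nonneg _) (mul_nonneg (hb.1 _ _) (ha.outSum_nonneg _))),
      logb, ← inv_div (outSum (prodChannel a b) i.2), log_inv]
    ring
  have hpos : ∀ i, u i ≠ 0 → 0 < √(r i) := fun i hi => by
    have hab : 0 < prodChannel a b i.1 i.2 := (hP.1 _ _).lt_of_ne' (right_ne_zero_of_mul hi)
    have ha0 : 0 < a i.1 i.2.1 := (ha.1 _ _).lt_of_ne' (left_ne_zero_of_mul hab.ne')
    have hb0 : 0 < b i.1 i.2.2 := (hb.1 _ _).lt_of_ne' (right_ne_zero_of_mul hab.ne')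
    exact sqrt_pos.2 (div_pos (hab.trans_le (hP.le_outSum _ _))
      (mul_pos hb0 (ha0.trans_le (ha.le_outSum _ _))))
  have hlog : Summable fun i => u i * log √(r i) :=
    (hcond.summable.mul_left (-(log c / 2))).congr fun i => by
      rw [hterm]
      field_simp
  obtain ⟨hs, hle⟩ := summable_and_tsum_mul_sqrt_le ha hb
  have hGibbs := tsum_mul_log_le_log (fun i => mul_nonneg (by positivity) (hP.1 _ _))
    hP.hasSum_joint hpos hs hlog (hle.trans (sqrt_le_sqrt hB))
  have hB0 : 0 ≤ B := (Finset.sum_nonneg fun x _ => Finset.sum_nonneg fun x' _ =>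
    mul_nonneg (by positivity) (mul_nonneg (ha.overlap_nonneg x x') (Zb_nonneg b x x'))).trans hB
  rw [log_sqrt hB0] at hGibbs
  rw [← hcond.tsum_eq, tsum_congr hterm, tsum_mul_left, logb]
  calc -(log B / log c) = -(2 / log c) * (log B / 2) := by ring
    _ ≤ _ := mul_le_mul_of_nonpos_left hGibbs (by have := div_pos two_pos hL; linarith)

theorem symCap_prodChannel_sub_ge (hq : 2 ≤ Fintype.card X) (ha : IsChannel a) (hb : IsChannel b) :
    symCap (prodChannel a b) - symCap a ≥
      -logb (Fintype.card X) (1 - 1 / (Fintype.card X : ℝ) ^ 2 *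
        ∑ x, ∑ x', Zb a x x' ^ 2 * (1 - Zb b x x')) := by
  have : Nonempty X := Fintype.card_pos_iff.1 (by omega)
  rw [symCap_prodChannel_sub ha hb, ge_iff_le]
  exact neg_logb_le_condInfo (by exact_mod_cast hq) ha hb (sum_overlap_mul_Zb_le ha hb)

end

theorem symCap_diff_ge_general {X Y : Type*} [Fintype X]
    (hq : 2 ≤ Fintype.card X) (W : X → Y → ℝ) (hW : IsChannel W)
    (σ τ : Equiv.Perm X) :
    symCap (fun (x : X) (p : Y × Y) => W (σ x) p.1 * W (τ x) p.2) - symCap W ≥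
      -Real.logb (Fintype.card X)
        (1 - (1 / (Fintype.card X : ℝ) ^ 2) *
          ∑ z : X, ∑ x : X,
            Zb W z x ^ 2 * (1 - Zb W (τ (σ⁻¹ z)) (τ (σ⁻¹ x)))) := by
  have hσ : symCap (fun (x : X) (p : Y × Y) => W (σ x) p.1 * W (τ x) p.2) =
      symCap (prodChannel W fun x => W (τ (σ⁻¹ x))) := by
    rw [← symCap_comp_perm σ (prodChannel W _)]
    congr 1
    ext x p
    simp [prodChannel]
  rw [hσ]
  exact symCap_prodChannel_sub_ge hq hW (hW.comp _)

/-- cut-off rate lower bound on `I(W') - I(W)` for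
`W'(y₁,y₂|x) = W(y₁|σ(x)) W(y₂|τ(x))`. -/
theorem symCap_diff_ge {X Y : Type*} [Fintype X] [Countable Y]
    (hq : 2 ≤ Fintype.card X) (W : X → Y → ℝ) (hW : IsChannel W)
    (σ τ : Equiv.Perm X) :
    symCap (fun (x : X) (p : Y × Y) => W (σ x) p.1 * W (τ x) p.2) - symCap W ≥
      -Real.logb (Fintype.card X)
        (1 - (1 / (Fintype.card X : ℝ) ^ 2) *
          ∑ z : X, ∑ x : X,
            Zb W z x ^ 2 * (1 - Zb W (τ (σ⁻¹ z)) (τ (σ⁻¹ x)))) :=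
  symCap_diff_ge_general hq W hW σ τ

end Polar
end
end

section
/- Let {X̌_n}_{n∈ℕ} be a random process with values in (0,1) such that (1) X̌_n converges almost surely to a random variable X̌_∞, and (2) X̌_{n+1} ≥ č · X̌_n^{Ď_n} for all n, where {Ď_n}_{n∈ℕ} are i.i.d. random variables with Ď_n ≥ 1 and č is a positive constant. Then for every β > E[log₂ Ď₁], lim_{n→∞} P( X̌_n < 2^{−2^{βn}} ) = 0. -/
/-!
Write `Z n = -logb 2 (X n)`. The recursion becomes `Z (n + 1) ≤ D n * Z n + a` for a constant
`a > 0` depending on `c`, hence `Z n ≤ (Z 0 + n a) ∏_{i<n} D i` and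
`logb 2 (Z n) ≤ ∑_{i<n} logb 2 (D i) + O(log n)`. By the strong law of large numbers the right-hand
side is `n E[logb 2 D₀] + o(n) < β n` eventually, almost surely. So almost surely the event
`X n < 2 ^ (-2 ^ (β n))` happens only finitely often, and its probability tends to `0`.
-/

open MeasureTheory Filter Real Finset ProbabilityTheory
open scoped Topology

namespace Polar

lemma neg_logb_le_mul_neg_logb_sub {b c x y d : ℝ} (hb : 1 < b) (hc : 0 < c) (hx : 0 < x)
    (h : c * x ^ d ≤ y) : -logb b y ≤ d * -logb b x - logb b c := by
  have hxd : 0 < x ^ d := rpow_pos_of_pos hx d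
  have hlog := logb_le_logb_of_le hb (mul_pos hc hxd) h
  rw [logb_mul hc.ne' hxd.ne', logb_rpow_eq_mul_logb_of_pos hx] at hlog
  linarith

lemma le_add_mul_mul_prod_of_le_mul_add {z d : ℕ → ℝ} {a : ℝ} (ha : 0 ≤ a)
    (hd : ∀ n, 1 ≤ d n) (h : ∀ n, z (n + 1) ≤ d n * z n + a) (n : ℕ) :
    z n ≤ (z 0 + n * a) * ∏ i ∈ range n, d i := by
  induction n with
  | zero => simp
  | succ n ih =>
    have hprod : 1 ≤ ∏ i ∈ range n, d i := one_le_prod fun i _ => hd i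
    calc z (n + 1) ≤ d n * ((z 0 + n * a) * ∏ i ∈ range n, d i) + a * 1 := by
          nlinarith [h n, hd n]
      _ ≤ d n * ((z 0 + n * a) * ∏ i ∈ range n, d i) + a * (d n * ∏ i ∈ range n, d i) := by
          gcongr
          nlinarith [hd n]
      _ = (z 0 + (n + 1 : ℕ) * a) * ∏ i ∈ range (n + 1), d i := by
          rw [prod_range_succ]
          push_cast
          ring

lemma tendsto_logb_add_mul_div_atTop (b u : ℝ) {a : ℝ} (ha : 0 < a) :
    Tendsto (fun n : ℕ => logb b (u + n * a) / n) atTop (𝓝 0) := by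
  have hlin : Tendsto (fun n : ℕ => u + n * a) atTop atTop :=
    tendsto_atTop_add_const_left _ u
      (tendsto_natCast_atTop_atTop.atTop_mul_const ha)
  have hlog := (tendsto_pow_log_div_mul_add_atTop (1 / a) (-u / a) 1 (by positivity)).comp hlin
  rw [← zero_div (log b)]
  refine (hlog.div_const (log b)).congr fun n => ?_
  have hden : 1 / a * (u + n * a) + -u / a = n := by field_simp; ring
  simp only [Function.comp_apply, pow_one, hden, logb, div_right_comm]

lemma eventually_lt_mul_of_tendsto_div {f : ℕ → ℝ} {m β : ℝ}
    (hf : Tendsto (fun n : ℕ => f n / n) atTop (𝓝 m)) (hm : m < β) :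
    ∀ᶠ n : ℕ in atTop, f n < β * n := by
  filter_upwards [hf.eventually_lt_const hm, eventually_gt_atTop 0] with n hn hpos
  rwa [div_lt_iff₀ (by exact_mod_cast hpos)] at hn

theorem eventually_rpow_neg_rpow_le {X d : ℕ → ℝ} {c m β : ℝ} (hc : 0 < c)
    (hX : ∀ n, X n ∈ Set.Ioo (0 : ℝ) 1) (hd : ∀ n, 1 ≤ d n)
    (hrec : ∀ n, c * X n ^ d n ≤ X (n + 1))
    (hS : Tendsto (fun n : ℕ => (∑ i ∈ range n, logb 2 (d i)) / n) atTop (𝓝 m))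
    (hm : m < β) :
    ∀ᶠ n : ℕ in atTop, (2 : ℝ) ^ (-(2 : ℝ) ^ (β * n)) ≤ X n := by
  set Z : ℕ → ℝ := fun n => -logb 2 (X n)
  set a : ℝ := |logb 2 c| + 1
  have ha_pos : 0 < a := by positivity
  have hZ_pos : ∀ n, 0 < Z n := fun n => neg_pos.2 (logb_neg one_lt_two (hX n).1 (hX n).2)
  have hZ_rec : ∀ n, Z (n + 1) ≤ d n * Z n + a := fun n =>
    (neg_logb_le_mul_neg_logb_sub one_lt_two hc (hX n).1 (hrec n)).trans
      (by linarith [neg_abs_le (logb 2 c)])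
  have hZ_le := le_add_mul_mul_prod_of_le_mul_add ha_pos.le hd hZ_rec
  have hlogZ_le : ∀ n, logb 2 (Z n) ≤ logb 2 (Z 0 + n * a) + ∑ i ∈ range n, logb 2 (d i) := by
    intro n
    have hd_pos : ∀ i ∈ range n, 0 < d i := fun i _ => one_pos.trans_le (hd i)
    have hlin_pos : 0 < Z 0 + n * a := by have := hZ_pos 0; positivity
    rw [← logb_prod _ _ fun i hi => (hd_pos i hi).ne',
      ← logb_mul hlin_pos.ne' (prod_pos hd_pos).ne']
    exact logb_le_logb_of_le one_lt_two (hZ_pos n) (hZ_le n)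
  have hlim : Tendsto (fun n : ℕ => (logb 2 (Z 0 + n * a) + ∑ i ∈ range n, logb 2 (d i)) / n)
      atTop (𝓝 m) := by
    simpa only [add_div, zero_add] using (tendsto_logb_add_mul_div_atTop 2 (Z 0) ha_pos).add hS
  filter_upwards [eventually_lt_mul_of_tendsto_div hlim hm] with n hn
  have hZn : Z n < 2 ^ (β * n) :=
    (logb_lt_iff_lt_rpow one_lt_two (hZ_pos n)).1 ((hlogZ_le n).trans_lt hn)
  rw [← le_logb_iff_rpow_le one_lt_two (hX n).1]
  linarith

theorem strong_law_ae_comp {Ω E : Type*} [MeasurableSpace Ω] [MeasurableSpace E] {μ : Measure Ω}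
    {D : ℕ → Ω → E} {f : E → ℝ} (hf : Measurable f) (hD : ∀ n, AEMeasurable (D n) μ)
    (hindep : iIndepFun D μ) (hident : ∀ n, μ.map (D n) = μ.map (D 0))
    (hint : Integrable (fun ω => f (D 0 ω)) μ) :
    ∀ᵐ ω ∂μ, Tendsto (fun n : ℕ => (∑ i ∈ range n, f (D i ω)) / n) atTop
      (𝓝 (∫ ω, f (D 0 ω) ∂μ)) :=
  strong_law_ae_real (fun i ω => f (D i ω)) hint
    (fun _ _ hij => (hindep.indepFun hij).comp hf hf)
    (fun i => (IdentDistrib.mk (hD i) (hD 0) (hident i)).comp hf)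

lemma tendsto_measure_zero_of_ae_eventually_notMem {Ω ι : Type*} [MeasurableSpace Ω]
    {μ : Measure Ω} [IsFiniteMeasure μ] {L : Filter ι} [L.IsCountablyGenerated] {A : ι → Set Ω}
    (hA : ∀ i, MeasurableSet (A i)) (h : ∀ᵐ ω ∂μ, ∀ᶠ i in L, ω ∉ A i) :
    Tendsto (fun i => μ (A i)) L (𝓝 0) := by
  have hlim : ∀ᵐ ω ∂μ, ∀ᶠ i in L, ω ∈ A i ↔ ω ∈ (∅ : Set Ω) := by
    filter_upwards [h] with ω hω
    filter_upwards [hω] with i hi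
    simpa using hi
  simpa using tendsto_measure_of_ae_tendsto_indicator_of_isFiniteMeasure L
    MeasurableSet.empty hA hlim

theorem rate_of_polarization_lower_general {Ω : Type*} [MeasurableSpace Ω]
    (P : Measure Ω) [IsProbabilityMeasure P]
    (Xh : ℕ → Ω → ℝ) (D : ℕ → Ω → ℝ) (c : ℝ) (hc : 0 < c)
    (hXmeas : ∀ n, Measurable (Xh n))
    (hXval : ∀ n ω, Xh n ω ∈ Set.Ioo (0 : ℝ) 1)
    (hDmeas : ∀ n, Measurable (D n))
    (hDone : ∀ n, ∀ᵐ ω ∂P, 1 ≤ D n ω)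
    (hDindep : ProbabilityTheory.iIndepFun D P)
    (hDident : ∀ n, Measure.map (D n) P = Measure.map (D 0) P)
    (hDint : Integrable (fun ω => Real.logb 2 (D 0 ω)) P)
    (hrec : ∀ n, ∀ᵐ ω ∂P, c * Xh n ω ^ D n ω ≤ Xh (n + 1) ω)
    (β : ℝ) (hβ : ∫ ω, Real.logb 2 (D 0 ω) ∂P < β) :
    Tendsto (fun n => (P {ω | Xh n ω < 2 ^ (-(2 : ℝ) ^ (β * n))}).toReal)
      atTop (nhds 0) := by
  have hSLLN := strong_law_ae_comp (measurable_log.div_const (log 2))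
    (fun n => (hDmeas n).aemeasurable) hDindep hDident hDint
  have hfinitely_often : ∀ᵐ ω ∂P, ∀ᶠ n : ℕ in atTop,
      ω ∉ {ω | Xh n ω < 2 ^ (-(2 : ℝ) ^ (β * n))} := by
    filter_upwards [hSLLN, ae_all_iff.2 hDone, ae_all_iff.2 hrec] with ω hS hDω hrecω
    filter_upwards [eventually_rpow_neg_rpow_le hc (fun n => hXval n ω) hDω hrecω hS hβ]
      with n hn
    simpa using hn
  have hP := tendsto_measure_zero_of_ae_eventually_notMem
    (fun n => measurableSet_lt (hXmeas n) measurable_const) hfinitely_often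
  exact (ENNReal.tendsto_toReal ENNReal.zero_ne_top).comp hP

/-- rate of polarization, lower process. -/
theorem rate_of_polarization_lower {Ω : Type*} [MeasurableSpace Ω]
    (P : Measure Ω) [IsProbabilityMeasure P]
    (Xh : ℕ → Ω → ℝ) (Xinf : Ω → ℝ) (D : ℕ → Ω → ℝ) (c : ℝ) (hc : 0 < c)
    (hXmeas : ∀ n, Measurable (Xh n))
    (hXval : ∀ n ω, Xh n ω ∈ Set.Ioo (0 : ℝ) 1)
    (hXconv : ∀ᵐ ω ∂P, Tendsto (fun n => Xh n ω) atTop (nhds (Xinf ω)))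
    (hDmeas : ∀ n, Measurable (D n))
    (hDone : ∀ n, ∀ᵐ ω ∂P, 1 ≤ D n ω)
    (hDindep : ProbabilityTheory.iIndepFun D P)
    (hDident : ∀ n, Measure.map (D n) P = Measure.map (D 0) P)
    (hDint : Integrable (fun ω => Real.logb 2 (D 0 ω)) P)
    (hrec : ∀ n, ∀ᵐ ω ∂P, c * Xh n ω ^ D n ω ≤ Xh (n + 1) ω)
    (β : ℝ) (hβ : ∫ ω, Real.logb 2 (D 0 ω) ∂P < β) :
    Tendsto (fun n => (P {ω | Xh n ω < 2 ^ (-(2 : ℝ) ^ (β * n))}).toReal)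
      atTop (nhds 0) :=
  rate_of_polarization_lower_general P Xh D c hc hXmeas hXval hDmeas hDone hDindep hDident hDint
    hrec β hβ

end Polar
end

section
/- For every integer ℓ ≥ 2, (1/ℓ) Σ_{i=0}^{ℓ-1} log_ℓ(i+1) ≥ 1 − (ℓ−1)/(ℓ · ln ℓ); consequently, (1/ℓ) Σ_{i=0}^{ℓ-1} log_ℓ(i+1) → 1 as ℓ → ∞. (This quantity is the exponent of the ℓ×ℓ Reed–Solomon kernel, whose partial distances are D^{(i)} = i+1.) -/
/-!
Since `∑_{i<ℓ} log (i+1) = log ℓ!`, the exponent equals `log ℓ! / (ℓ log ℓ)`, and the bound is the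
elementary Stirling-type estimate `log n! ≥ n log n - n + 1`. Its induction step
`(n+1) log (n+1) - n log n - 1 ≤ log (n+1)` is `n log (1 + 1/n) ≤ 1`. Each term `log_ℓ (i+1)` is at
most `1`, so the exponent is squeezed between `1 - 1/ln ℓ` and `1`.
-/

open Filter Real Finset

noncomputable section

namespace Polar

def reedSolomonExponent (ℓ : ℕ) : ℝ :=
  (1 / (ℓ : ℝ)) * ∑ i ∈ range ℓ, logb ℓ ((i : ℝ) + 1)

lemma mul_log_add_one_sub_log_le_one {x : ℝ} (hx : 0 ≤ x) : x * (log (x + 1) - log x) ≤ 1 := by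
  rcases hx.eq_or_lt with rfl | hx
  · simp
  have h := log_le_sub_one_of_pos (x := (x + 1) / x) (by positivity)
  rw [log_div (by positivity) hx.ne'] at h
  calc x * (log (x + 1) - log x) ≤ x * ((x + 1) / x - 1) := mul_le_mul_of_nonneg_left h hx.le
    _ = 1 := by field_simp; ring

lemma mul_log_sub_add_one_le_sum_log {n : ℕ} (hn : 1 ≤ n) :
    (n : ℝ) * log n - n + 1 ≤ ∑ i ∈ range n, log ((i : ℝ) + 1) := by
  induction n, hn using Nat.le_induction with
  | base => simp
  | succ n hn ih =>
    have step := mul_log_add_one_sub_log_le_one (Nat.cast_nonneg (α := ℝ) n)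
    rw [sum_range_succ]
    push_cast
    nlinarith

lemma one_sub_le_reedSolomonExponent {ℓ : ℕ} (hℓ : 2 ≤ ℓ) :
    1 - ((ℓ : ℝ) - 1) / ((ℓ : ℝ) * log ℓ) ≤ reedSolomonExponent ℓ := by
  have hlog : 0 < log (ℓ : ℝ) := log_pos (by exact_mod_cast hℓ)
  have hpos : (0 : ℝ) < ℓ * log ℓ := by positivity
  have hsum := mul_log_sub_add_one_le_sum_log (n := ℓ) (by omega)
  have hexp : reedSolomonExponent ℓ = (∑ i ∈ range ℓ, log ((i : ℝ) + 1)) / (ℓ * log ℓ) := by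
    simp only [reedSolomonExponent, logb, ← sum_div]
    ring
  rw [hexp, one_sub_div hpos.ne', div_le_div_iff_of_pos_right hpos]
  linarith

lemma reedSolomonExponent_le_one (ℓ : ℕ) : reedSolomonExponent ℓ ≤ 1 := by
  have hterm : ∀ i ∈ range ℓ, logb ℓ ((i : ℝ) + 1) ≤ 1 := fun i hi =>
    div_le_one_of_le₀
      (log_le_log (by positivity) (by exact_mod_cast mem_range.mp hi)) (log_natCast_nonneg ℓ)
  calc reedSolomonExponent ℓ ≤ (1 / (ℓ : ℝ)) * ∑ _i ∈ range ℓ, (1 : ℝ) :=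
        mul_le_mul_of_nonneg_left (sum_le_sum hterm) (by positivity)
    _ ≤ 1 := by
        rw [sum_const, card_range, nsmul_one, one_div_mul_eq_div]
        exact div_self_le_one _

lemma tendsto_reedSolomonExponent_atTop : Tendsto reedSolomonExponent atTop (nhds 1) := by
  have hlower : Tendsto (fun ℓ : ℕ => 1 - 1 / log ℓ) atTop (nhds 1) := by
    simpa only [one_div, sub_zero, Pi.inv_apply, Function.comp_apply] using tendsto_const_nhds.sub
      (tendsto_log_atTop.comp tendsto_natCast_atTop_atTop).inv_tendsto_atTop
  refine tendsto_of_tendsto_of_tendsto_of_le_of_le' hlower tendsto_const_nhds ?_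
    (Eventually.of_forall reedSolomonExponent_le_one)
  filter_upwards [eventually_ge_atTop 2] with ℓ hℓ
  have hlog : 0 < log (ℓ : ℝ) := log_pos (by exact_mod_cast hℓ)
  calc 1 - 1 / log ℓ ≤ 1 - ((ℓ : ℝ) - 1) / (ℓ * log ℓ) := by
        rw [sub_le_sub_iff_left, div_le_div_iff₀ (by positivity) hlog]
        nlinarith
    _ ≤ reedSolomonExponent ℓ := one_sub_le_reedSolomonExponent hℓ

/-- the exponent of the Reed–Solomon kernel,
`(1/ℓ) Σ_{i<ℓ} log_ℓ (i+1)`, is at least `1 - (ℓ-1)/(ℓ ln ℓ)` and tends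
to `1` as `ℓ → ∞`. -/
theorem reed_solomon_exponent :
    (∀ ℓ : ℕ, 2 ≤ ℓ →
      1 - ((ℓ : ℝ) - 1) / ((ℓ : ℝ) * Real.log ℓ) ≤
        (1 / (ℓ : ℝ)) * ∑ i ∈ Finset.range ℓ, Real.logb ℓ ((i : ℝ) + 1)) ∧
    Tendsto (fun ℓ : ℕ =>
        (1 / (ℓ : ℝ)) * ∑ i ∈ Finset.range ℓ, Real.logb ℓ ((i : ℝ) + 1))
      atTop (nhds 1) :=
  ⟨fun _ hℓ => one_sub_le_reedSolomonExponent hℓ, tendsto_reedSolomonExponent_atTop⟩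

end Polar

end
end
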